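/- arXiv:1601.04838 — 8 statements merged into one kernel-verified Lean document; each statement's English description precedes it below -/
import Mathlib

section
/- Let b, c, d, e, p₀, q₀ ∈ ℚ with b ≠ 0, c·e ≠ 0, p₀ ≠ 0, and set m = p₀² + b·q₀². Assume m ≠ 0, that −b is not the square of a rational number, and that the quartic polynomial f(X) = m²X⁴ + c(dX + e)² has nonzero discriminant. If the set of rational points (U, w) ∈ ℚ² satisfying w² = −b(2b²U⁴ − b·c·d²·U² − 2c·e²·m²) is infinite, then the set of X ∈ ℚ for which there exist p, q ∈ ℚ with (p² + b·q²)² = m²X⁴ + c(dX + e)² is infinite. -/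
/-!
A point (U, w) of the curve w² = -b(2b²U⁴ - bcd²U² - 2ce²m²) yields x with
(bU² + m²x²)² = m²·f(x), where f(x) = m²x⁴ + c(dx + e)²: as an equation in x this is a quadratic
whose discriminant is a square multiple of w². Then f(x) is the square of
(bU² + m²x²)/m = (p₀² + bq₀²)(x² + b(U/m)²), a value of p² + bq² by Brahmagupta's identity.
Off the finitely many points with U(2bU² - cd²) = 0 the map (U, w) ↦ (U, x) is injective, and each
x comes from only finitely many U, so infinitely many curve points give infinitely many x.
-/

open Polynomial

theorem finite_setOf_pow_eq {R : Type*} [CommRing R] [IsDomain R] {n : ℕ} (hn : 0 < n) (a : R) :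
    {x : R | x ^ n = a}.Finite :=
  (nthRootsFinset n a).finite_toSet.subset fun _ hx => (mem_nthRootsFinset hn a).2 hx

theorem Set.Infinite.image_of_finite_fibers {α β : Type*} {f : α → β} {s : Set α}
    (hs : s.Infinite) (hf : ∀ y, (s ∩ f ⁻¹' {y}).Finite) : (f '' s).Infinite :=
  fun h => hs (Set.Finite.of_finite_fibers f h fun y _ => hf y)

theorem finite_setOf_sq_eq_of_fst_mem {R : Type*} [CommRing R] [IsDomain R] (g : R → R)
    {F : Set R} (hF : F.Finite) : {P : R × R | P.2 ^ 2 = g P.1 ∧ P.1 ∈ F}.Finite := by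
  refine Set.Finite.of_finite_fibers Prod.fst (hF.subset ?_) fun u _ => ?_
  · rintro _ ⟨P, hP, rfl⟩
    exact hP.2
  · refine ((finite_setOf_pow_eq two_pos (g u)).image (Prod.mk u)).subset ?_
    rintro ⟨u', w⟩ ⟨⟨hw, -⟩, rfl : u' = u⟩
    exact ⟨w, hw, rfl⟩

section Field

variable {K : Type*} [Field K]

theorem finite_setOf_mul_mul_sq_sub_eq_zero {a : K} (ha : a ≠ 0) (r : K) :
    {U : K | U * (a * U ^ 2 - r) = 0}.Finite := by
  refine ((Set.finite_singleton 0).union (finite_setOf_pow_eq two_pos (r / a))).subset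
    fun U hU => (mul_eq_zero.1 hU).imp id fun h => ?_
  rw [Set.mem_ofPred_eq, eq_div_iff ha]
  linear_combination h

theorem finite_setOf_sq_mul_sq_add_eq {b : K} (hb : b ≠ 0) (k y : K) :
    {U : K | (b * U ^ 2 + k) ^ 2 = y}.Finite := by
  refine (finite_setOf_pow_eq two_pos y).preimage' (f := fun U => b * U ^ 2 + k) fun z _ => ?_
  refine (finite_setOf_pow_eq two_pos ((z - k) / b)).subset fun U hU => ?_
  rw [Set.mem_ofPred_eq, eq_div_iff hb, ← (hU : b * U ^ 2 + k = z)]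
  ring

theorem exists_sq_add_mul_sq_sq_eq {b p₀ q₀ m U x y : K} (hm : m = p₀ ^ 2 + b * q₀ ^ 2)
    (hm0 : m ≠ 0) (h : (b * U ^ 2 + m ^ 2 * x ^ 2) ^ 2 = m ^ 2 * y) :
    ∃ p q : K, (p ^ 2 + b * q ^ 2) ^ 2 = y := by
  refine ⟨p₀ * x - b * q₀ * (U / m), p₀ * (U / m) + q₀ * x, ?_⟩
  have hnorm : (p₀ * x - b * q₀ * (U / m)) ^ 2 + b * (p₀ * (U / m) + q₀ * x) ^ 2 =
      (b * U ^ 2 + m ^ 2 * x ^ 2) / m := by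
    rw [← sq_add_mul_sq_mul_sq_add_mul_sq, ← hm]
    field_simp
    ring
  rw [hnorm, div_pow, h]
  field_simp

variable (b c d e m : K)

/-- For (U, w) on the curve this is a root of the quadratic
m²(2bU² - cd²)x² - 2m²cde·x + b²U⁴ - m²ce², whose discriminant is 4(mUw)². -/
def curveX (U w : K) : K :=
  (m * c * d * e + U * w) / (m * (2 * b * U ^ 2 - c * d ^ 2))

variable {b c d e m}

theorem curveX_injective {U : K} (hm0 : m ≠ 0) (hU : U ≠ 0) (hA : 2 * b * U ^ 2 - c * d ^ 2 ≠ 0) :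
    Function.Injective (curveX b c d e m U) := by
  intro w w' h
  rw [curveX, curveX, div_left_inj' (mul_ne_zero hm0 hA), add_right_inj] at h
  exact mul_left_cancel₀ hU h

theorem curveX_spec {U w : K} (hm0 : m ≠ 0) (hA : 2 * b * U ^ 2 - c * d ^ 2 ≠ 0)
    (hw : w ^ 2 = -b * (2 * b ^ 2 * U ^ 4 - b * c * d ^ 2 * U ^ 2 - 2 * c * e ^ 2 * m ^ 2)) :
    (b * U ^ 2 + m ^ 2 * curveX b c d e m U w ^ 2) ^ 2 =
      m ^ 2 * (m ^ 2 * curveX b c d e m U w ^ 4 + c * (d * curveX b c d e m U w + e) ^ 2) := by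
  set x := curveX b c d e m U w with hx
  have hxA : m * (2 * b * U ^ 2 - c * d ^ 2) * x = m * c * d * e + U * w := by
    rw [hx, curveX]; field_simp
  have hquad : m ^ 2 * (2 * b * U ^ 2 - c * d ^ 2) * x ^ 2 - 2 * m ^ 2 * c * d * e * x
      + (b ^ 2 * U ^ 4 - m ^ 2 * c * e ^ 2) = 0 := by
    refine (mul_eq_zero.1 ?_).resolve_left hA
    linear_combination (m * (2 * b * U ^ 2 - c * d ^ 2) * x - m * c * d * e + U * w) * hxA
      + U ^ 2 * hw
  linear_combination hquad

end Field

theorem stmt_0_general (b c d e p₀ q₀ m : ℚ) (hb : b ≠ 0)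
    (hm : m = p₀ ^ 2 + b * q₀ ^ 2) (hm0 : m ≠ 0)
    (hinf : {P : ℚ × ℚ | P.2 ^ 2 =
      -b * (2 * b ^ 2 * P.1 ^ 4 - b * c * d ^ 2 * P.1 ^ 2 - 2 * c * e ^ 2 * m ^ 2)}.Infinite) :
    {x : ℚ | ∃ p q : ℚ, (p ^ 2 + b * q ^ 2) ^ 2 = m ^ 2 * x ^ 4 + c * (d * x + e) ^ 2}.Infinite := by
  set g : ℚ → ℚ := fun U => -b * (2 * b ^ 2 * U ^ 4 - b * c * d ^ 2 * U ^ 2 - 2 * c * e ^ 2 * m ^ 2)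
  have hbad : {P : ℚ × ℚ | P.2 ^ 2 = g P.1 ∧
      P.1 ∈ {U : ℚ | U * (2 * b * U ^ 2 - c * d ^ 2) = 0}}.Finite :=
    finite_setOf_sq_eq_of_fst_mem g
      (finite_setOf_mul_mul_sq_sub_eq_zero (mul_ne_zero two_ne_zero hb) _)
  have hgood : {P : ℚ × ℚ | P.2 ^ 2 = g P.1 ∧
      P.1 ≠ 0 ∧ 2 * b * P.1 ^ 2 - c * d ^ 2 ≠ 0}.Infinite :=
    (hinf.sdiff hbad).mono fun _ hP => ⟨hP.1, mul_ne_zero_iff.1 fun h0 => hP.2 ⟨hP.1, h0⟩⟩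
  set S := {Q : ℚ × ℚ |
    (b * Q.1 ^ 2 + m ^ 2 * Q.2 ^ 2) ^ 2 = m ^ 2 * (m ^ 2 * Q.2 ^ 4 + c * (d * Q.2 + e) ^ 2)}
  have hS : S.Infinite := by
    refine (hgood.image (f := fun P => (P.1, curveX b c d e m P.1 P.2)) ?_).mono ?_
    · rintro ⟨U, w⟩ ⟨-, hU, hA⟩ ⟨U', w'⟩ - h
      obtain ⟨rfl, h⟩ := Prod.mk.inj h
      exact Prod.ext rfl (curveX_injective hm0 hU hA h)
    · rintro _ ⟨⟨U, w⟩, ⟨hw, -, hA⟩, rfl⟩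
      exact curveX_spec hm0 hA hw
  have hx : (Prod.snd '' S).Infinite := hS.image_of_finite_fibers fun x =>
    ((finite_setOf_sq_mul_sq_add_eq hb (m ^ 2 * x ^ 2)
      (m ^ 2 * (m ^ 2 * x ^ 4 + c * (d * x + e) ^ 2))).image (·, x)).subset
      fun ⟨U, x'⟩ ⟨hU, (hx' : x' = x)⟩ => ⟨U, hx' ▸ hU, hx' ▸ rfl⟩
  refine hx.mono ?_
  rintro _ ⟨⟨U, x⟩, hQ, rfl⟩
  exact exists_sq_add_mul_sq_sq_eq hm hm0 hQ

theorem stmt_0 (b c d e p₀ q₀ m : ℚ) (hb : b ≠ 0) (hce : c * e ≠ 0) (hp₀ : p₀ ≠ 0)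
    (hm : m = p₀ ^ 2 + b * q₀ ^ 2) (hm0 : m ≠ 0)
    (hirr : ¬ IsSquare (-b))
    (hdisc : (C (m ^ 2) * X ^ 4 + C c * (C d * X + C e) ^ 2 : ℚ[X]).Separable)
    (hinf : {P : ℚ × ℚ | P.2 ^ 2 =
      -b * (2 * b ^ 2 * P.1 ^ 4 - b * c * d ^ 2 * P.1 ^ 2 - 2 * c * e ^ 2 * m ^ 2)}.Infinite) :
    {x : ℚ | ∃ p q : ℚ, (p ^ 2 + b * q ^ 2) ^ 2 = m ^ 2 * x ^ 4 + c * (d * x + e) ^ 2}.Infinite :=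
  stmt_0_general b c d e p₀ q₀ m hb hm hm0 hinf
end

section
/- Let a₂, a₀ ∈ ℚ with a₀·(a₂² − 4a₀) ≠ 0. If the set of rational points (X, Y) ∈ ℚ² on the curve C : Y² = X⁴ + a₂X² + a₀ is infinite, then the set of rational points (X, Y) on C for which there exist p, q ∈ ℚ with Y = p² − (a₂² − 4a₀)·q² is infinite. -/
/-!
The duplication map `F(x, y) = ((x⁴ - a₀)/(2xy), (y/2x)² - (a₂² - 4a₀)(x/2y)²)` sends the points
of `C` with `xy ≠ 0` back to `C`, and its second coordinate is visibly of the form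
`p² - (a₂² - 4a₀)q²`. Its fibres are finite: the `x`-coordinate of a point in the fibre over
`(X, Y)` is a root of the monic octic `(x⁴ - a₀)² - 4X²x²(x⁴ + a₂x² + a₀)`. Since only finitely
many points of `C` have `xy = 0`, `F` maps an infinite set onto an infinite set.
-/

open Polynomial

section

variable {K : Type*} [Field K]

def quarticCurve (a₂ a₀ : K) : Set (K × K) := {P | P.2 ^ 2 = P.1 ^ 4 + a₂ * P.1 ^ 2 + a₀}

/-- Up to `X ↦ -X`, the third intersection of `quarticCurve a₂ a₀` with the parabola
`Y = X² + bX + c` tangent to it at `P`. -/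
def quarticDup (a₂ a₀ : K) (P : K × K) : K × K :=
  ((P.1 ^ 4 - a₀) / (2 * P.1 * P.2),
    (P.2 / (2 * P.1)) ^ 2 - (a₂ ^ 2 - 4 * a₀) * (P.1 / (2 * P.2)) ^ 2)

@[simp]
lemma mem_quarticCurve {a₂ a₀ : K} {P : K × K} :
    P ∈ quarticCurve a₂ a₀ ↔ P.2 ^ 2 = P.1 ^ 4 + a₂ * P.1 ^ 2 + a₀ :=
  Iff.rfl

lemma quarticDup_mem_quarticCurve {a₂ a₀ : K} (h2 : (2 : K) ≠ 0) {P : K × K}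
    (hP : P ∈ quarticCurve a₂ a₀) (hxy : P.1 * P.2 ≠ 0) :
    quarticDup a₂ a₀ P ∈ quarticCurve a₂ a₀ := by
  obtain ⟨x, y⟩ := P
  simp only [mem_quarticCurve, quarticDup] at hP hxy ⊢
  have hx : x ≠ 0 := left_ne_zero_of_mul hxy
  have hy : y ≠ 0 := right_ne_zero_of_mul hxy
  field_simp
  rw [show y ^ 4 = (y ^ 2) ^ 2 by ring, hP]
  ring

lemma finite_setOf_sq_eq (k : K) : {y : K | y ^ 2 = k}.Finite :=
  (nthRootsFinset 2 k).finite_toSet.subset fun _ hy => (mem_nthRootsFinset two_pos k).2 hy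

lemma finite_setOf_isRoot_fst_and_sq_eq {p : K[X]} (hp : p ≠ 0) (f : K → K) :
    {P : K × K | p.IsRoot P.1 ∧ P.2 ^ 2 = f P.1}.Finite :=
  ((finite_setOfPred_isRoot hp).biUnion fun x _ =>
      (Set.finite_singleton x).prod (finite_setOf_sq_eq (f x))).subset
    fun _ ⟨hx, hy⟩ => Set.mem_biUnion hx ⟨rfl, hy⟩

lemma finite_quarticCurve_sep_mul_eq_zero (a₂ a₀ : K) :
    {P ∈ quarticCurve a₂ a₀ | P.1 * P.2 = 0}.Finite := by
  have hp : (X * (X ^ 4 + C a₂ * X ^ 2 + C a₀)).Monic := by monicity!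
  refine (finite_setOf_isRoot_fst_and_sq_eq hp.ne_zero
    fun x => x ^ 4 + a₂ * x ^ 2 + a₀).subset ?_
  rintro ⟨x, y⟩ ⟨hP, hxy : x * y = 0⟩
  rw [mem_quarticCurve] at hP
  refine ⟨?_, hP⟩
  simp only [IsRoot.def, eval_mul, eval_add, eval_pow, eval_C, eval_X]
  linear_combination y * hxy - x * hP

lemma finite_quarticCurve_sep_quarticDup_fst_eq {a₂ a₀ : K} (h2 : (2 : K) ≠ 0) (c : K) :
    {P ∈ quarticCurve a₂ a₀ | P.1 * P.2 ≠ 0 ∧ (quarticDup a₂ a₀ P).1 = c}.Finite := by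
  have hp : ((X ^ 4 - C a₀) ^ 2 - C (4 * c ^ 2) * X ^ 2 * (X ^ 4 + C a₂ * X ^ 2 + C a₀)).Monic := by
    monicity!
  refine (finite_setOf_isRoot_fst_and_sq_eq hp.ne_zero
    fun x => x ^ 4 + a₂ * x ^ 2 + a₀).subset ?_
  rintro ⟨x, y⟩ ⟨hP, hxy : x * y ≠ 0, hc⟩
  rw [mem_quarticCurve] at hP
  refine ⟨?_, hP⟩
  have heq : x ^ 4 - a₀ = c * (2 * x * y) := by
    rw [← hc, quarticDup, div_mul_cancel₀ _ (by simpa [h2] using hxy)]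
  simp only [IsRoot.def, eval_mul, eval_add, eval_sub, eval_pow, eval_C, eval_X]
  linear_combination (x ^ 4 - a₀ + 2 * c * x * y) * heq + 4 * c ^ 2 * x ^ 2 * hP

end

theorem stmt_3_general (a₂ a₀ : ℚ)
    (hinf : {P : ℚ × ℚ | P.2 ^ 2 = P.1 ^ 4 + a₂ * P.1 ^ 2 + a₀}.Infinite) :
    {P : ℚ × ℚ | P.2 ^ 2 = P.1 ^ 4 + a₂ * P.1 ^ 2 + a₀ ∧
      ∃ p q : ℚ, P.2 = p ^ 2 - (a₂ ^ 2 - 4 * a₀) * q ^ 2}.Infinite := by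
  set S := {P ∈ quarticCurve a₂ a₀ | P.1 * P.2 ≠ 0}
  have hS : S.Infinite := (hinf.sdiff (finite_quarticCurve_sep_mul_eq_zero a₂ a₀)).mono
    fun P hP => ⟨hP.1, fun h => hP.2 ⟨hP.1, h⟩⟩
  have himage : (quarticDup a₂ a₀ '' S).Infinite := fun hfin =>
    hS <| hfin.of_finite_fibers _ fun c _ =>
      (finite_quarticCurve_sep_quarticDup_fst_eq two_ne_zero c.1).subset
        fun P ⟨⟨hP, hxy⟩, hc⟩ => ⟨hP, hxy, congrArg Prod.fst hc⟩
  refine himage.mono ?_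
  rintro _ ⟨P, ⟨hP, hxy⟩, rfl⟩
  exact ⟨quarticDup_mem_quarticCurve two_ne_zero hP hxy, _, _, rfl⟩

theorem stmt_3 (a₂ a₀ : ℚ) (h : a₀ * (a₂ ^ 2 - 4 * a₀) ≠ 0)
    (hinf : {P : ℚ × ℚ | P.2 ^ 2 = P.1 ^ 4 + a₂ * P.1 ^ 2 + a₀}.Infinite) :
    {P : ℚ × ℚ | P.2 ^ 2 = P.1 ^ 4 + a₂ * P.1 ^ 2 + a₀ ∧
      ∃ p q : ℚ, P.2 = p ^ 2 - (a₂ ^ 2 - 4 * a₀) * q ^ 2}.Infinite :=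
  stmt_3_general a₂ a₀ hinf
end

section
/- The set of X ∈ ℚ for which there exist p, q ∈ ℚ with (p² + 3q²)² = X⁴ + 3 is infinite. -/
/-!
On the curve `y² = x⁴ + c` the duplication map sends `(x, y)` to a point whose `y`-coordinate
`(x⁸ + 6cx⁴ + c²) / (4x²y²) = (y / 2x)² + c (x / y)²` is a norm from `ℚ(√-c)`, so the
`x`-coordinate of every doubled point lies in the set. When `|c|₂ ≤ 1 < |x|₂`, doubling
multiplies `|x|₂` by `2`, hence the iterated doubles of `(-1/2, 7/4)`, the double of `(1, 2)`, on
`y² = x⁴ + 3` have pairwise distinct `x`-coordinates.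
-/

open IsAbsoluteValue

def quarticDouble {K : Type*} [Field K] (c : K) (P : K × K) : K × K :=
  ((P.1 ^ 4 - c) / (2 * P.1 * P.2), (P.2 / (2 * P.1)) ^ 2 + c * (P.1 / P.2) ^ 2)

theorem quarticDouble_mem_curve {K : Type*} [Field K] [NeZero (2 : K)] {c : K} {P : K × K}
    (hx : P.1 ≠ 0) (hy : P.2 ≠ 0) (h : P.2 ^ 2 = P.1 ^ 4 + c) :
    (quarticDouble c P).2 ^ 2 = (quarticDouble c P).1 ^ 4 + c := by
  simp only [quarticDouble]
  field_simp
  linear_combination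
    (P.2 ^ 2 + P.1 ^ 4 + c) * (P.2 ^ 4 + (P.1 ^ 4 + c) ^ 2 - 8 * P.1 ^ 4 * c) * h

theorem ne_zero_of_one_lt_padicNorm {p : ℕ} {x : ℚ} (hx : 1 < padicNorm p x) : x ≠ 0 := by
  rintro rfl
  rw [padicNorm.zero] at hx
  exact zero_lt_one.not_gt hx

theorem padicNorm_two_two : padicNorm 2 (2 : ℚ) = 2⁻¹ := by
  simpa using padicNorm.padicNorm_p_of_prime (p := 2)

section PadicNorm

variable {p : ℕ} [Fact p.Prime] {c : ℚ}

theorem padicNorm_lt_padicNorm_pow_four {x : ℚ} (hc : padicNorm p c ≤ 1)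
    (hx : 1 < padicNorm p x) : padicNorm p c < padicNorm p (x ^ 4) := by
  rw [abv_pow (padicNorm p)]
  exact hc.trans_lt (one_lt_pow₀ hx (by norm_num))

variable {P : ℚ × ℚ}

theorem padicNorm_snd_of_mem_curve (hc : padicNorm p c ≤ 1) (hx : 1 < padicNorm p P.1)
    (h : P.2 ^ 2 = P.1 ^ 4 + c) : padicNorm p P.2 = padicNorm p P.1 ^ 2 := by
  have hlt := padicNorm_lt_padicNorm_pow_four hc hx
  refine (pow_left_inj₀ (padicNorm.nonneg _) (by positivity) two_ne_zero).mp ?_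
  rw [← abv_pow (padicNorm p), h, padicNorm.add_eq_max_of_ne hlt.ne', max_eq_left hlt.le,
    abv_pow (padicNorm p)]
  ring

theorem snd_ne_zero_of_mem_curve (hc : padicNorm p c ≤ 1) (hx : 1 < padicNorm p P.1)
    (h : P.2 ^ 2 = P.1 ^ 4 + c) : P.2 ≠ 0 := by
  refine ne_zero_of_one_lt_padicNorm (p := p) ?_
  rw [padicNorm_snd_of_mem_curve hc hx h]
  exact one_lt_pow₀ hx two_ne_zero

end PadicNorm

section TwoAdic

variable {c : ℚ} {P : ℚ × ℚ}

theorem padicNorm_two_quarticDouble_fst (hc : padicNorm 2 c ≤ 1) (hx : 1 < padicNorm 2 P.1)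
    (h : P.2 ^ 2 = P.1 ^ 4 + c) :
    padicNorm 2 (quarticDouble c P).1 = 2 * padicNorm 2 P.1 := by
  have hlt := padicNorm_lt_padicNorm_pow_four hc hx
  have hnum : padicNorm 2 (P.1 ^ 4 - c) = padicNorm 2 P.1 ^ 4 := by
    rw [sub_eq_add_neg, padicNorm.add_eq_max_of_ne (by rw [padicNorm.neg]; exact hlt.ne'),
      padicNorm.neg, max_eq_left hlt.le, abv_pow (padicNorm 2)]
  have hx0 : padicNorm 2 P.1 ≠ 0 := by positivity
  simp only [quarticDouble, padicNorm.div, padicNorm.mul, hnum, padicNorm_two_two,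
    padicNorm_snd_of_mem_curve hc hx h]
  field_simp

theorem iterate_quarticDouble_mem_curve_and_padicNorm (hc : padicNorm 2 c ≤ 1)
    (hx : 1 < padicNorm 2 P.1) (h : P.2 ^ 2 = P.1 ^ 4 + c) (n : ℕ) :
    ((quarticDouble c)^[n] P).2 ^ 2 = ((quarticDouble c)^[n] P).1 ^ 4 + c ∧
      padicNorm 2 ((quarticDouble c)^[n] P).1 = 2 ^ n * padicNorm 2 P.1 := by
  induction n with
  | zero => exact ⟨h, by simp⟩
  | succ n ih =>
    obtain ⟨hcurve, hnorm⟩ := ih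
    set Q := (quarticDouble c)^[n] P
    have hQ : 1 < padicNorm 2 Q.1 := by
      rw [hnorm]
      exact one_lt_mul_of_le_of_lt (one_le_pow₀ one_le_two) hx
    rw [Function.iterate_succ_apply']
    refine ⟨quarticDouble_mem_curve (ne_zero_of_one_lt_padicNorm hQ)
      (snd_ne_zero_of_mem_curve hc hQ hcurve) hcurve, ?_⟩
    rw [padicNorm_two_quarticDouble_fst hc hQ hcurve, hnorm, pow_succ']
    ring

theorem infinite_setOf_norm_sq_eq_pow_four_add (hc : padicNorm 2 c ≤ 1)
    (hx : 1 < padicNorm 2 P.1) (h : P.2 ^ 2 = P.1 ^ 4 + c) :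
    {x : ℚ | ∃ p q : ℚ, (p ^ 2 + c * q ^ 2) ^ 2 = x ^ 4 + c}.Infinite := by
  set Q : ℕ → ℚ × ℚ := fun n ↦ (quarticDouble c)^[n] P
  have hQ (n : ℕ) :
      (Q n).2 ^ 2 = (Q n).1 ^ 4 + c ∧ padicNorm 2 (Q n).1 = 2 ^ n * padicNorm 2 P.1 :=
    iterate_quarticDouble_mem_curve_and_padicNorm hc hx h n
  have hQ₁ (n : ℕ) : 1 < padicNorm 2 (Q n).1 := by
    rw [(hQ n).2]
    exact one_lt_mul_of_le_of_lt (one_le_pow₀ one_le_two) hx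
  refine Set.infinite_of_injective_forall_mem (f := fun n ↦ (quarticDouble c (Q n)).1) ?_ ?_
  · intro n m hnm
    have hnorm := congrArg (padicNorm 2) hnm
    simp only [padicNorm_two_quarticDouble_fst hc (hQ₁ _) (hQ _).1, (hQ _).2] at hnorm
    exact pow_right_injective₀ (M₀ := ℚ) two_pos (by norm_num)
      (mul_right_cancel₀ (zero_lt_one.trans hx).ne' (mul_left_cancel₀ two_ne_zero hnorm))
  · intro n
    exact ⟨(Q n).2 / (2 * (Q n).1), (Q n).1 / (Q n).2,
      quarticDouble_mem_curve (ne_zero_of_one_lt_padicNorm (hQ₁ n))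
        (snd_ne_zero_of_mem_curve hc (hQ₁ n) (hQ n).1) (hQ n).1⟩

end TwoAdic

theorem stmt_4 :
    {x : ℚ | ∃ p q : ℚ, (p ^ 2 + 3 * q ^ 2) ^ 2 = x ^ 4 + 3}.Infinite := by
  refine infinite_setOf_norm_sq_eq_pow_four_add (P := (-1 / 2, 7 / 4)) ?_ ?_ (by norm_num)
  · simpa using padicNorm.of_nat (p := 2) 3
  · change 1 < padicNorm 2 (-1 / 2 : ℚ)
    rw [neg_div, padicNorm.neg, padicNorm.div, padicNorm.one, padicNorm_two_two]
    norm_num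
end

section
/- The set of X ∈ ℚ for which there exist p, q ∈ ℚ with (p² − 5q²)² = X⁴ − 78X² + 1296 is infinite; that is, there are infinitely many rational points on the elliptic curve Y² = X⁴ − 78X² + 1296 = (X² − 24)(X² − 54) whose Y-coordinate is represented by the quadratic form p² − 5q². -/
/-!
Substituting `x² = 3μ²(μ² - 24) / (2(μ² - 25))` turns `x⁴ - 78x² + 1296 = (x² - 24)(x² - 54)`
into the square of `3(μ² - 20)(30 - μ²) / (2(μ² - 25))`. When `w² = 6(μ² - 24)(μ² - 25)` has a
rational solution, `x = μw / (2(μ² - 25))` is rational and that square root is a norm from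
`ℚ(√5)`. This quartic is birational to `E : y² = x³ + 588x² + 36x` via `μ = 120x/y`.

Doubling a point of `E` whose abscissa `X` has `|X|₂ > 1` multiplies `|X|₂` by `4`, and the
resulting `x` satisfies `|x|₂² |X|₂ = |144|₂²`. So the points `2ⁿ(49/100, -12607/1000)` give
pairwise distinct `x`.
-/

open Function IsAbsoluteValue

theorem padicNorm.add_eq_left_of_lt {p : ℕ} [Fact p.Prime] {q r : ℚ}
    (h : padicNorm p r < padicNorm p q) : padicNorm p (q + r) = padicNorm p q := by
  rw [padicNorm.add_eq_max_of_ne h.ne', max_eq_left h.le]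

namespace NormQuartic

section Doubling

variable {K : Type*} [Field K] [NeZero (2 : K)] (a b : K)

def OnCurve (P : K × K) : Prop :=
  P.2 ^ 2 = P.1 ^ 3 + a * P.1 ^ 2 + b * P.1

def double (P : K × K) : K × K :=
  let l := (3 * P.1 ^ 2 + 2 * a * P.1 + b) / (2 * P.2)
  let x := l ^ 2 - a - 2 * P.1
  (x, l * (P.1 - x) - P.2)

variable {a b}

theorem onCurve_double {P : K × K} (h : OnCurve a b P) (hy : P.2 ≠ 0) :
    OnCurve a b (double a b P) := by
  obtain ⟨x, y⟩ := P
  set l := (3 * x ^ 2 + 2 * a * x + b) / (2 * y) with hl_def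
  have hl : 2 * y * l = 3 * x ^ 2 + 2 * a * x + b := by rw [hl_def]; field_simp
  simp only [OnCurve, NormQuartic.double] at h ⊢
  linear_combination (l ^ 2 - a - 3 * x) * hl + h

theorem double_fst_eq {P : K × K} (h : OnCurve a b P) (hy : P.2 ≠ 0) :
    (double a b P).1 = ((P.1 ^ 2 - b) / (2 * P.2)) ^ 2 := by
  obtain ⟨x, y⟩ := P
  simp only [OnCurve, NormQuartic.double] at h hy ⊢
  field_simp
  linear_combination (-4 * (a + 2 * x)) * h

end Doubling

section PadicNorm

variable {p : ℕ} [Fact p.Prime] {a b : ℚ} {P : ℚ × ℚ}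

theorem padicNorm_sq_add_mul_add (ha : padicNorm p a ≤ 1) (hb : padicNorm p b ≤ 1) {x : ℚ}
    (hx : 1 < padicNorm p x) : padicNorm p (x ^ 2 + a * x + b) = padicNorm p x ^ 2 := by
  have hax : padicNorm p (a * x) < padicNorm p (x ^ 2) := by
    rw [padicNorm.mul, abv_pow (padicNorm p)]
    nlinarith [padicNorm.nonneg (p := p) a]
  rw [padicNorm.add_eq_left_of_lt, padicNorm.add_eq_left_of_lt hax, abv_pow (padicNorm p)]
  rw [padicNorm.add_eq_left_of_lt hax, abv_pow (padicNorm p)]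
  nlinarith

theorem sq_ne_of_one_lt_padicNorm {c x : ℚ} (hc : padicNorm p c ≤ 1) (hx : 1 < padicNorm p x) :
    x ^ 2 ≠ c := by
  rintro rfl
  rw [abv_pow (padicNorm p)] at hc
  nlinarith

theorem OnCurve.padicNorm_snd_sq (h : OnCurve a b P) (ha : padicNorm p a ≤ 1)
    (hb : padicNorm p b ≤ 1) (hx : 1 < padicNorm p P.1) :
    padicNorm p P.2 ^ 2 = padicNorm p P.1 ^ 3 := by
  have hy : P.2 ^ 2 = P.1 * (P.1 ^ 2 + a * P.1 + b) := h.trans (by ring)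
  rw [← abv_pow (padicNorm p), hy, padicNorm.mul, padicNorm_sq_add_mul_add ha hb hx]
  ring

theorem OnCurve.snd_ne_zero (h : OnCurve a b P) (ha : padicNorm p a ≤ 1)
    (hb : padicNorm p b ≤ 1) (hx : 1 < padicNorm p P.1) : P.2 ≠ 0 := by
  intro hy
  have := h.padicNorm_snd_sq ha hb hx
  rw [hy, padicNorm.zero] at this
  nlinarith [pow_pos (zero_lt_one.trans hx) 3]

theorem OnCurve.padicNorm_double_fst (h : OnCurve a b P) (ha : padicNorm 2 a ≤ 1)
    (hb : padicNorm 2 b ≤ 1) (hx : 1 < padicNorm 2 P.1) :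
    padicNorm 2 (double a b P).1 = 4 * padicNorm 2 P.1 := by
  have hy := h.padicNorm_snd_sq ha hb hx
  have hy0 := h.snd_ne_zero ha hb hx
  have hb' : padicNorm 2 (-b) < padicNorm 2 (P.1 ^ 2) := by
    rw [padicNorm.neg, abv_pow (padicNorm 2)]
    nlinarith
  have h2 : padicNorm 2 (2 : ℚ) = 1 / 2 := by simpa using padicNorm.padicNorm_p_of_prime (p := 2)
  rw [double_fst_eq h hy0, abv_pow (padicNorm 2), padicNorm.div, padicNorm.mul, sub_eq_add_neg,
    padicNorm.add_eq_left_of_lt hb', abv_pow (padicNorm 2), h2]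
  field_simp
  linear_combination -4 * hy

theorem OnCurve.iterate_double (h : OnCurve a b P) (ha : padicNorm 2 a ≤ 1)
    (hb : padicNorm 2 b ≤ 1) (hx : 1 < padicNorm 2 P.1) (n : ℕ) :
    OnCurve a b ((double a b)^[n] P) ∧
      padicNorm 2 ((double a b)^[n] P).1 = 4 ^ n * padicNorm 2 P.1 := by
  induction n with
  | zero => simpa using h
  | succ n ih =>
    obtain ⟨hn, hxn⟩ := ih
    have hxn' : 1 < padicNorm 2 ((double a b)^[n] P).1 := by
      rw [hxn]
      nlinarith [one_le_pow₀ (M₀ := ℚ) (a := 4) (by norm_num) (n := n)]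
    rw [iterate_succ_apply', hn.padicNorm_double_fst ha hb hxn', hxn, pow_succ]
    exact ⟨onCurve_double hn (hn.snd_ne_zero ha hb hxn'), by ring⟩

end PadicNorm

def solutionSet : Set ℚ :=
  {x | ∃ p q : ℚ, (p ^ 2 - 5 * q ^ 2) ^ 2 = x ^ 4 - 78 * x ^ 2 + 1296}

theorem exists_sq_sub_five_sq_eq {μ w : ℚ} (hw : w ^ 2 = 6 * (μ ^ 2 - 24) * (μ ^ 2 - 25))
    (hw0 : w ≠ 0) :
    ∃ p q : ℚ, p ^ 2 - 5 * q ^ 2 = 3 * (μ ^ 2 - 20) * (30 - μ ^ 2) / (2 * (μ ^ 2 - 25)) := by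
  have h24 : μ ^ 2 - 24 ≠ 0 := by rintro h; simp [h] at hw; exact hw0 hw
  have h25 : μ ^ 2 - 25 ≠ 0 := by rintro h; simp [h] at hw; exact hw0 hw
  -- `p + q√5 = 3/(2w) · ((μ + 10) - (μ + 2)√5) · (w - (μ² - 24)√5)`, the last two factors having
  -- norms `-4(μ² - 20)` and `w² - 5(μ² - 24)² = (μ² - 24)(μ² - 30)`
  refine ⟨3 * ((μ + 10) * w + 5 * (μ + 2) * (μ ^ 2 - 24)) / (2 * w),
    -3 * ((μ + 10) * (μ ^ 2 - 24) + (μ + 2) * w) / (2 * w), ?_⟩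
  field_simp
  linear_combination (-10 * (μ ^ 2 - 20) * (μ ^ 2 - 24)) * hw

theorem quartic_eq_sq {μ x : ℚ} (h25 : μ ^ 2 ≠ 25)
    (hx : x ^ 2 = 3 * μ ^ 2 * (μ ^ 2 - 24) / (2 * (μ ^ 2 - 25))) :
    x ^ 4 - 78 * x ^ 2 + 1296 = (3 * (μ ^ 2 - 20) * (30 - μ ^ 2) / (2 * (μ ^ 2 - 25))) ^ 2 := by
  have h25' : μ ^ 2 - 25 ≠ 0 := sub_ne_zero.2 h25
  -- `x² - 24 = 3(μ² - 20)² / (2(μ² - 25))` and `x² - 54 = 3(μ² - 30)² / (2(μ² - 25))`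
  rw [show x ^ 4 = (x ^ 2) ^ 2 by ring, hx]
  field_simp
  ring

/-- `μw / (2(μ² - 25))` for `μ = 120X/Y` and `w = 60(X² - 36)/(X² + 588X + 36)`,
where `P = (X, Y)`. -/
def surfaceX (P : ℚ × ℚ) : ℚ :=
  -144 * P.1 * (P.1 - 6) / (P.2 * (P.1 + 6))

theorem surfaceX_mem {P : ℚ × ℚ} (h : OnCurve 588 36 P) (hy : P.2 ≠ 0) (h36 : P.1 ^ 2 ≠ 36) :
    surfaceX P ∈ solutionSet := by
  obtain ⟨x, y⟩ := P
  simp only [OnCurve] at h hy h36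
  set D := x ^ 2 + 588 * x + 36
  have hyD : y ^ 2 = x * D := h.trans (by ring)
  obtain ⟨hx0, hD⟩ : x ≠ 0 ∧ D ≠ 0 := mul_ne_zero_iff.1 (hyD ▸ pow_ne_zero 2 hy)
  obtain ⟨hx6, hx6'⟩ : x - 6 ≠ 0 ∧ x + 6 ≠ 0 :=
    mul_ne_zero_iff.1 fun h0 => h36 (by linear_combination h0)
  have h24 : (120 * x / y) ^ 2 - 24 = -24 * (x - 6) ^ 2 / D := by
    field_simp
    rw [hyD]
    ring
  have h25 : (120 * x / y) ^ 2 - 25 = -25 * (x + 6) ^ 2 / D := by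
    field_simp
    rw [hyD]
    ring
  have h25' : (120 * x / y) ^ 2 ≠ 25 := by
    rw [← sub_ne_zero, h25]
    exact div_ne_zero (mul_ne_zero (by norm_num) (pow_ne_zero 2 hx6')) hD
  obtain ⟨p, q, hpq⟩ := exists_sq_sub_five_sq_eq (μ := 120 * x / y) (w := 60 * (x ^ 2 - 36) / D)
    (by rw [mul_assoc, h24, h25]; field_simp; ring)
    (div_ne_zero (mul_ne_zero (by norm_num) (sub_ne_zero.2 h36)) hD)
  refine ⟨p, q, ?_⟩
  rw [hpq, quartic_eq_sq h25']
  rw [h24, h25, surfaceX]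
  field_simp
  norm_num

theorem padicNorm_surfaceX_sq_mul {p : ℕ} [Fact p.Prime] {P : ℚ × ℚ} (h : OnCurve 588 36 P)
    (hx : 1 < padicNorm p P.1) :
    padicNorm p (surfaceX P) ^ 2 * padicNorm p P.1 = padicNorm p 144 ^ 2 := by
  have h588 : padicNorm p (588 : ℚ) ≤ 1 := by exact_mod_cast padicNorm.of_nat 588
  have h36 : padicNorm p (36 : ℚ) ≤ 1 := by exact_mod_cast padicNorm.of_nat 36
  have h6 : padicNorm p (6 : ℚ) ≤ 1 := by exact_mod_cast padicNorm.of_nat 6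
  have hy := h.padicNorm_snd_sq h588 h36 hx
  have hy0 : padicNorm p P.2 ≠ 0 := padicNorm.nonzero (h.snd_ne_zero h588 h36 hx)
  have hx6 : padicNorm p (P.1 + 6) = padicNorm p P.1 := padicNorm.add_eq_left_of_lt (by linarith)
  have hx6' : padicNorm p (P.1 - 6) = padicNorm p P.1 := by
    rw [sub_eq_add_neg]
    exact padicNorm.add_eq_left_of_lt (by rw [padicNorm.neg]; linarith)
  rw [surfaceX, padicNorm.div, padicNorm.mul, padicNorm.mul, padicNorm.mul, padicNorm.neg, hx6,
    hx6']
  field_simp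
  linear_combination -padicNorm p 144 ^ 2 * hy

theorem padicNorm_fst_eq_of_surfaceX_eq {p : ℕ} [Fact p.Prime] {P P' : ℚ × ℚ}
    (h : OnCurve 588 36 P) (h' : OnCurve 588 36 P') (hx : 1 < padicNorm p P.1)
    (hx' : 1 < padicNorm p P'.1) (heq : surfaceX P = surfaceX P') :
    padicNorm p P.1 = padicNorm p P'.1 := by
  have hP := padicNorm_surfaceX_sq_mul h hx
  have hP' := padicNorm_surfaceX_sq_mul h' hx'
  rw [heq, ← hP'] at hP
  refine mul_left_cancel₀ (fun h0 => ?_) hP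
  rw [h0, zero_mul, eq_comm] at hP'
  exact pow_ne_zero 2 (padicNorm.nonzero (by norm_num)) hP'

/-- Twice the generator `(36, -900)` of `E(ℚ)`. -/
def basePoint : ℚ × ℚ := (49 / 100, -12607 / 1000)

theorem onCurve_basePoint : OnCurve 588 36 basePoint := by
  norm_num [OnCurve, basePoint]

theorem padicNorm_basePoint_fst : padicNorm 2 basePoint.1 = 4 := by
  have h49 : padicNorm 2 (49 : ℚ) = 1 := by
    exact_mod_cast (padicNorm.nat_eq_one_iff 49).2 (by norm_num)
  have h25 : padicNorm 2 (25 : ℚ) = 1 := by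
    exact_mod_cast (padicNorm.nat_eq_one_iff 25).2 (by norm_num)
  have h2 : padicNorm 2 (2 : ℚ) = 1 / 2 := by
    simpa using padicNorm.padicNorm_p_of_prime (p := 2)
  rw [basePoint, padicNorm.div, h49, show (100 : ℚ) = 2 * 2 * 25 by norm_num, padicNorm.mul,
    padicNorm.mul, h2, h25]
  norm_num

end NormQuartic

open NormQuartic

theorem stmt_7 :
    {x : ℚ | ∃ p q : ℚ, (p ^ 2 - 5 * q ^ 2) ^ 2 = x ^ 4 - 78 * x ^ 2 + 1296}.Infinite := by
  have h588 : padicNorm 2 (588 : ℚ) ≤ 1 := by exact_mod_cast padicNorm.of_nat 588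
  have h36 : padicNorm 2 (36 : ℚ) ≤ 1 := by exact_mod_cast padicNorm.of_nat 36
  set Q : ℕ → ℚ × ℚ := fun n => (double 588 36)^[n] basePoint
  have hQ : ∀ n, OnCurve 588 36 (Q n) ∧ padicNorm 2 (Q n).1 = 4 ^ n * 4 := fun n => by
    simpa [padicNorm_basePoint_fst] using
      onCurve_basePoint.iterate_double h588 h36 (by rw [padicNorm_basePoint_fst]; norm_num) n
  have hQ1 : ∀ n, 1 < padicNorm 2 (Q n).1 := fun n => by
    rw [(hQ n).2]
    nlinarith [one_le_pow₀ (M₀ := ℚ) (a := 4) (by norm_num) (n := n)]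
  refine Set.infinite_of_injective_forall_mem (s := solutionSet) (f := fun n => surfaceX (Q n))
    (fun m n hmn => ?_) fun n => surfaceX_mem (hQ n).1
      ((hQ n).1.snd_ne_zero h588 h36 (hQ1 n)) (sq_ne_of_one_lt_padicNorm h36 (hQ1 n))
  have h4 := padicNorm_fst_eq_of_surfaceX_eq (hQ m).1 (hQ n).1 (hQ1 m) (hQ1 n) hmn
  rw [(hQ m).2, (hQ n).2] at h4
  exact pow_right_injective₀ (by norm_num) (by norm_num) (mul_right_cancel₀ four_ne_zero h4)
end

section
/- There are no rational numbers u, y satisfying y² = 102·(10001 − 4046u + 71009u²)·(−239735 + 28322u + 2388313u²). -/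
/-! Write `u = a / b` in lowest terms. Multiplying by `b ^ 4`, a rational point gives an integer
square `(y b²)² = F(a, b)`, where `F` is the homogenised right-hand side. Now `102 = 17 · 6`, and
modulo `17` the two quadratic factors are `5 b²` and `-b²`. So if `17 ∤ b` then `17` divides
`F(a, b)` exactly once, while if `17 ∣ b` (hence `17 ∤ a`) each quadratic factor is divisible by
`17` exactly once and `17` divides `F(a, b)` exactly three times. Either way the `17`-adic
valuation of `F(a, b)` is odd. -/

theorem Prime.not_isSquare_pow_mul {R : Type*} [CommMonoidWithZero R] [IsCancelMulZero R]
    {p m : R} (hp : Prime p) (hm : ¬ p ∣ m) {n : ℕ} (hn : Odd n) :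
    ¬ IsSquare (p ^ n * m) := by
  obtain ⟨k, rfl⟩ := hn
  induction k with
  | zero =>
    rintro ⟨r, hr⟩
    rw [mul_zero, zero_add, pow_one] at hr
    obtain ⟨s, rfl⟩ : p ∣ r := (hp.dvd_or_dvd (hr ▸ dvd_mul_right p m)).elim id id
    refine hm ⟨s * s, mul_left_cancel₀ hp.ne_zero ?_⟩
    rw [hr]; ac_rfl
  | succ k ih =>
    rintro ⟨r, hr⟩
    obtain ⟨s, rfl⟩ : p ∣ r :=
      (hp.dvd_or_dvd (hr ▸ dvd_mul_of_dvd_left (dvd_pow_self p (by omega)) m)).elim id id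
    refine ih ⟨s, mul_left_cancel₀ (mul_ne_zero hp.ne_zero hp.ne_zero) ?_⟩
    calc p * p * (p ^ (2 * k + 1) * m) = p ^ (2 * (k + 1) + 1) * m := by
          rw [← mul_assoc, ← sq, ← pow_add, add_comm 2, mul_add, mul_one, add_right_comm]
      _ = p * p * (s * s) := by rw [hr]; ac_rfl

def quarticForm (a b : ℤ) : ℤ :=
  102 * (10001 * b ^ 2 - 4046 * a * b + 71009 * a ^ 2) *
    (-239735 * b ^ 2 + 28322 * a * b + 2388313 * a ^ 2)

theorem quarticForm_num_den (u : ℚ) :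
    (quarticForm u.num u.den : ℚ) = u.den ^ 4 * (102 * (10001 - 4046 * u + 71009 * u ^ 2) *
      (-239735 + 28322 * u + 2388313 * u ^ 2)) := by
  simp only [quarticForm, Int.cast_mul, Int.cast_add, Int.cast_sub, Int.cast_pow, Int.cast_neg,
    Int.cast_ofNat, Int.cast_natCast, ← u.mul_den_eq_num]
  ring

theorem Int.not_isSquare_pow_mul_of_intCast_ne_zero {p : ℕ} [Fact p.Prime] {m : ℤ}
    (hm : (m : ZMod p) ≠ 0) {n : ℕ} (hn : Odd n) : ¬ IsSquare ((p : ℤ) ^ n * m) :=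
  (Nat.prime_iff_prime_int.mp Fact.out).not_isSquare_pow_mul
    (mt (ZMod.intCast_zmod_eq_zero_iff_dvd m p).mpr hm) hn

instance fact_prime_seventeen : Fact (Nat.Prime 17) := ⟨by norm_num⟩

theorem not_isSquare_quarticForm_of_not_dvd {a b : ℤ} (hb : ¬ 17 ∣ b) :
    ¬ IsSquare (quarticForm a b) := by
  have hunit : ∀ x y : ZMod 17, y ≠ 0 → 6 * (10001 * y ^ 2 - 4046 * x * y + 71009 * x ^ 2) *
      (-239735 * y ^ 2 + 28322 * x * y + 2388313 * x ^ 2) ≠ 0 := by decide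
  have hform : quarticForm a b = ((17 : ℕ) : ℤ) ^ 1 *
      (6 * (10001 * b ^ 2 - 4046 * a * b + 71009 * a ^ 2) *
        (-239735 * b ^ 2 + 28322 * a * b + 2388313 * a ^ 2)) := by
    unfold quarticForm; push_cast; ring
  rw [hform]
  refine Int.not_isSquare_pow_mul_of_intCast_ne_zero ?_ (by decide)
  push_cast
  exact hunit _ _ (mt (ZMod.intCast_zmod_eq_zero_iff_dvd b 17).mp hb)

theorem not_isSquare_quarticForm_seventeen_mul {a c : ℤ} (ha : ¬ 17 ∣ a) :
    ¬ IsSquare (quarticForm a (17 * c)) := by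
  have hunit : ∀ x y : ZMod 17, x ≠ 0 → 6 * (170017 * y ^ 2 - 4046 * x * y + 4177 * x ^ 2) *
      (-4075495 * y ^ 2 + 28322 * x * y + 140489 * x ^ 2) ≠ 0 := by decide
  have hform : quarticForm a (17 * c) = ((17 : ℕ) : ℤ) ^ 3 *
      (6 * (170017 * c ^ 2 - 4046 * a * c + 4177 * a ^ 2) *
        (-4075495 * c ^ 2 + 28322 * a * c + 140489 * a ^ 2)) := by
    unfold quarticForm; push_cast; ring
  rw [hform]
  refine Int.not_isSquare_pow_mul_of_intCast_ne_zero ?_ (by decide)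
  push_cast
  exact hunit _ _ (mt (ZMod.intCast_zmod_eq_zero_iff_dvd a 17).mp ha)

theorem not_isSquare_quarticForm {a b : ℤ} (hab : IsCoprime a b) :
    ¬ IsSquare (quarticForm a b) := by
  by_cases hb : 17 ∣ b
  · obtain ⟨c, rfl⟩ := hb
    refine not_isSquare_quarticForm_seventeen_mul fun ha => ?_
    have h17 : ¬ IsUnit (17 : ℤ) := by norm_num [Int.isUnit_iff]
    exact h17 (hab.isUnit_of_dvd' ha (dvd_mul_right 17 c))
  · exact not_isSquare_quarticForm_of_not_dvd hb

theorem stmt_8 :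
    ¬ ∃ u y : ℚ, y ^ 2 = 102 * (10001 - 4046 * u + 71009 * u ^ 2) *
      (-239735 + 28322 * u + 2388313 * u ^ 2) := by
  rintro ⟨u, y, h⟩
  apply not_isSquare_quarticForm u.isCoprime_num_den
  rw [← Rat.isSquare_intCast_iff, quarticForm_num_den, ← h]
  exact ⟨y * u.den ^ 2, by ring⟩
end

section
/- Let b, p₀, q₀, r₀ ∈ ℚ with b ≠ 0, r₀ ≠ 0, and set m = p₀² + b·q₀². Assume m ≠ 0, m² ≠ r₀⁴, and that −b is not the square of a rational number. If the set of rational points (u, w) ∈ ℚ² satisfying w² = −2b·((m⁴ − p₀²(m + b·q₀²)r₀⁴) − 4b²p₀q₀³r₀⁴·u + 2b(m⁴ − (m² − 3b·p₀²q₀²)r₀⁴)·u² − 4b²p₀³q₀r₀⁴·u³ + b²(m⁴ − b·q₀²(m + p₀²)r₀⁴)·u⁴) is infinite, then the set of X ∈ ℚ for which there exist p, q ∈ ℚ with (p² + b·q²)² = X⁴ + (2(m² − r₀⁴)/r₀²)·X² − (m² − r₀⁴) is infinite. -/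
noncomputable section

def s9L (b p₀ q₀ r₀ U : ℚ) : ℚ := r₀ * (p₀ + b * q₀ * U)
def s9A (b U : ℚ) : ℚ := 1 + b * U ^ 2
def s9c2 (b p₀ q₀ r₀ m U : ℚ) : ℚ :=
  2 * m ^ 2 * (m ^ 2 * (s9L b p₀ q₀ r₀ U) ^ 2 + m ^ 3 * r₀ ^ 2 * (s9A b U)
    - 2 * r₀ ^ 4 * (s9L b p₀ q₀ r₀ U) ^ 2)
def s9c3 (b p₀ q₀ r₀ m U : ℚ) : ℚ :=
  4 * m * r₀ * (s9L b p₀ q₀ r₀ U) * (m ^ 3 * (s9A b U) - r₀ ^ 2 * (s9L b p₀ q₀ r₀ U) ^ 2)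
def s9c4 (b p₀ q₀ r₀ m U : ℚ) : ℚ :=
  r₀ ^ 2 * (m ^ 4 * (s9A b U) ^ 2 - (s9L b p₀ q₀ r₀ U) ^ 4)
def s9G (b p₀ q₀ r₀ m U : ℚ) : ℚ :=
  -2 * b * ((m ^ 4 - p₀ ^ 2 * (m + b * q₀ ^ 2) * r₀ ^ 4)
    - 4 * b ^ 2 * p₀ * q₀ ^ 3 * r₀ ^ 4 * U
    + 2 * b * (m ^ 4 - (m ^ 2 - 3 * b * p₀ ^ 2 * q₀ ^ 2) * r₀ ^ 4) * U ^ 2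
    - 4 * b ^ 2 * p₀ ^ 3 * q₀ * r₀ ^ 4 * U ^ 3
    + b ^ 2 * (m ^ 4 - b * q₀ ^ 2 * (m + p₀ ^ 2) * r₀ ^ 4) * U ^ 4)
def s9u (b p₀ q₀ r₀ m : ℚ) (P : ℚ × ℚ) : ℚ :=
  (-(s9c3 b p₀ q₀ r₀ m P.1) + 2 * m ^ 2 * r₀ ^ 2 * (p₀ * P.1 - q₀) * P.2)
    / (2 * s9c4 b p₀ q₀ r₀ m P.1)
def s9X (b p₀ q₀ r₀ m : ℚ) (P : ℚ × ℚ) : ℚ :=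
  r₀ + r₀ * (p₀ + b * q₀ * P.1) * (s9u b p₀ q₀ r₀ m P) / m

lemma s9_main_id (b p₀ q₀ r₀ m U u : ℚ) (hm : m = p₀ ^ 2 + b * q₀ ^ 2)
    (hm0 : m ≠ 0) (hr0 : r₀ ≠ 0) :
    ((p₀ + u) ^ 2 + b * (q₀ + U * u) ^ 2) ^ 2
      = (r₀ + r₀ * (p₀ + b * q₀ * U) * u / m) ^ 4
        + (2 * (m ^ 2 - r₀ ^ 4) / r₀ ^ 2) * (r₀ + r₀ * (p₀ + b * q₀ * U) * u / m) ^ 2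
        - (m ^ 2 - r₀ ^ 4)
        + u ^ 2 * (s9c2 b p₀ q₀ r₀ m U + s9c3 b p₀ q₀ r₀ m U * u
            + s9c4 b p₀ q₀ r₀ m U * u ^ 2) / (m ^ 4 * r₀ ^ 2) := by
  subst hm
  simp only [s9c2, s9c3, s9c4, s9L, s9A]
  field_simp
  ring

lemma s9_disc (b p₀ q₀ r₀ m U w : ℚ) (hm : m = p₀ ^ 2 + b * q₀ ^ 2)
    (hw : w ^ 2 = s9G b p₀ q₀ r₀ m U) :
    (2 * m ^ 2 * r₀ ^ 2 * (p₀ * U - q₀) * w) ^ 2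
      = (s9c3 b p₀ q₀ r₀ m U) ^ 2 - 4 * (s9c2 b p₀ q₀ r₀ m U) * (s9c4 b p₀ q₀ r₀ m U) := by
  subst hm
  simp only [s9c2, s9c3, s9c4, s9L, s9A]
  simp only [s9G] at hw
  linear_combination (4 * (p₀ ^ 2 + b * q₀ ^ 2) ^ 4 * r₀ ^ 4 * (p₀ * U - q₀) ^ 2) * hw

lemma s9_line (b p₀ q₀ r₀ m U u : ℚ) (hm : m = p₀ ^ 2 + b * q₀ ^ 2)
    (hm0 : m ≠ 0) (hr0 : r₀ ≠ 0) :
    p₀ * (p₀ + u) + b * q₀ * (q₀ + U * u)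
      = m * (r₀ + r₀ * (p₀ + b * q₀ * U) * u / m) / r₀ := by
  subst hm
  field_simp
  ring

lemma s9_rootfact (c2 c3 c4 δ : ℚ) (h4 : c4 ≠ 0) (hδ : δ ^ 2 = c3 ^ 2 - 4 * c2 * c4) :
    c2 + c3 * ((-c3 + δ) / (2 * c4)) + c4 * ((-c3 + δ) / (2 * c4)) ^ 2 = 0 := by
  have key : c2 + c3 * ((-c3 + δ) / (2 * c4)) + c4 * ((-c3 + δ) / (2 * c4)) ^ 2
      = (4 * c2 * c4 - c3 ^ 2 + δ ^ 2) / (4 * c4) := by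
    field_simp
    ring
  rw [key, hδ]
  have h0 : 4 * c2 * c4 - c3 ^ 2 + (c3 ^ 2 - 4 * c2 * c4) = 0 := by ring
  rw [h0, zero_div]

lemma s9_quadfin (a b c : ℚ) (h : a ≠ 0 ∨ b ≠ 0 ∨ c ≠ 0) :
    {x : ℚ | a * x ^ 2 + b * x + c = 0}.Finite := by
  by_contra hfin
  have hinf : {x : ℚ | a * x ^ 2 + b * x + c = 0}.Infinite := hfin
  obtain ⟨x₁, hx₁⟩ := hinf.nonempty
  obtain ⟨x₂, hx₂⟩ := (hinf.diff (Set.finite_singleton x₁)).nonempty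
  obtain ⟨x₃, hx₃⟩ := (hinf.diff ((Set.finite_singleton x₁).insert x₂)).nonempty
  have e₁ : a * x₁ ^ 2 + b * x₁ + c = 0 := hx₁
  have e₂ : a * x₂ ^ 2 + b * x₂ + c = 0 := hx₂.1
  have e₃ : a * x₃ ^ 2 + b * x₃ + c = 0 := hx₃.1
  have h21 : x₂ ≠ x₁ := by intro h'; exact hx₂.2 (by simp [h'])
  have h32 : x₃ ≠ x₂ := by intro h'; exact hx₃.2 (by simp [h'])
  have h31 : x₃ ≠ x₁ := by intro h'; exact hx₃.2 (by simp [h'])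
  have h12 : (x₁ - x₂) * (a * (x₁ + x₂) + b) = 0 := by linear_combination e₁ - e₂
  have h13 : (x₁ - x₃) * (a * (x₁ + x₃) + b) = 0 := by linear_combination e₁ - e₃
  have g12 : a * (x₁ + x₂) + b = 0 := by
    rcases mul_eq_zero.mp h12 with h' | h'
    · exact absurd (sub_eq_zero.mp h').symm h21
    · exact h'
  have g13 : a * (x₁ + x₃) + b = 0 := by
    rcases mul_eq_zero.mp h13 with h' | h'
    · exact absurd (sub_eq_zero.mp h').symm h31
    · exact h'
  have ha : a = 0 := by
    have hz : a * (x₂ - x₃) = 0 := by linear_combination g12 - g13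
    rcases mul_eq_zero.mp hz with h' | h'
    · exact h'
    · exact absurd (sub_eq_zero.mp h').symm h32
  have hb0 : b = 0 := by rw [ha] at g12; linarith
  have hc0 : c = 0 := by rw [ha, hb0] at e₁; linarith
  rcases h with h' | h' | h' <;> contradiction

lemma s9_slicefin {g : ℚ → ℚ} {T : Set (ℚ × ℚ)} (hT : ∀ P ∈ T, P.2 ^ 2 = g P.1)
    (hproj : (Prod.fst '' T).Finite) : T.Finite := by
  have hsub : T ⊆ ⋃ U ∈ Prod.fst '' T, (fun w => (U, w)) '' {w : ℚ | w ^ 2 = g U} := by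
    intro P hP
    refine Set.mem_biUnion ⟨P, hP, rfl⟩ ⟨P.2, hT P hP, ?_⟩
    exact Prod.mk.eta
  refine Set.Finite.subset (Set.Finite.biUnion hproj fun U _ => ?_) hsub
  refine Set.Finite.image _ (Set.Finite.subset (s9_quadfin 1 0 (-(g U)) (Or.inl one_ne_zero)) ?_)
  intro w hw
  simp only [Set.mem_setOf_eq] at hw ⊢
  linarith

end

theorem stmt_9 (b p₀ q₀ r₀ m : ℚ) (hb : b ≠ 0) (hr₀ : r₀ ≠ 0)
    (hm : m = p₀ ^ 2 + b * q₀ ^ 2) (hm0 : m ≠ 0) (hmr : m ^ 2 ≠ r₀ ^ 4)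
    (hirr : ¬ IsSquare (-b))
    (hinf : {P : ℚ × ℚ | P.2 ^ 2 =
      -2 * b * ((m ^ 4 - p₀ ^ 2 * (m + b * q₀ ^ 2) * r₀ ^ 4)
        - 4 * b ^ 2 * p₀ * q₀ ^ 3 * r₀ ^ 4 * P.1
        + 2 * b * (m ^ 4 - (m ^ 2 - 3 * b * p₀ ^ 2 * q₀ ^ 2) * r₀ ^ 4) * P.1 ^ 2
        - 4 * b ^ 2 * p₀ ^ 3 * q₀ * r₀ ^ 4 * P.1 ^ 3
        + b ^ 2 * (m ^ 4 - b * q₀ ^ 2 * (m + p₀ ^ 2) * r₀ ^ 4) * P.1 ^ 4)}.Infinite) :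
    {x : ℚ | ∃ p q : ℚ, (p ^ 2 + b * q ^ 2) ^ 2 =
      x ^ 4 + (2 * (m ^ 2 - r₀ ^ 4) / r₀ ^ 2) * x ^ 2 - (m ^ 2 - r₀ ^ 4)}.Infinite := by
  classical
  have hinfS : {P : ℚ × ℚ | P.2 ^ 2 = s9G b p₀ q₀ r₀ m P.1}.Infinite := hinf
  set S : Set (ℚ × ℚ) := {P : ℚ × ℚ | P.2 ^ 2 = s9G b p₀ q₀ r₀ m P.1} with hSdef
  have hbq0 : ¬(p₀ = 0 ∧ q₀ = 0) := by
    rintro ⟨h1, h2⟩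
    apply hm0
    rw [hm, h1, h2]; ring
  have h2q : (2 : ℚ) ≠ 0 := two_ne_zero
  have hpow2 : ∀ x : ℚ, x ^ 2 = 0 → x = 0 := fun x hx =>
    pow_eq_zero_iff (n := 2) (by norm_num) |>.mp hx
  have hpow3 : ∀ x : ℚ, x ^ 3 = 0 → x = 0 := fun x hx =>
    pow_eq_zero_iff (n := 3) (by norm_num) |>.mp hx
  -- finiteness of the exceptional parameter sets
  have hfinL : {U : ℚ | p₀ + b * q₀ * U = 0}.Finite := by
    refine Set.Finite.subset (s9_quadfin 0 (b * q₀) p₀ ?_) ?_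
    · by_cases hq : q₀ = 0
      · exact Or.inr (Or.inr fun hp => hbq0 ⟨hp, hq⟩)
      · exact Or.inr (Or.inl (mul_ne_zero hb hq))
    · intro U hU
      simp only [Set.mem_setOf_eq] at hU ⊢
      linarith
  have hfinline : {U : ℚ | p₀ * U - q₀ = 0}.Finite := by
    refine Set.Finite.subset (s9_quadfin 0 p₀ (-q₀) ?_) ?_
    · by_cases hp : p₀ = 0
      · exact Or.inr (Or.inr fun hq => hbq0 ⟨hp, by simpa using neg_eq_zero.mp hq⟩)
      · exact Or.inr (Or.inl hp)
    · intro U hU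
      simp only [Set.mem_setOf_eq] at hU ⊢
      linarith
  have hfinc4 : {U : ℚ | s9c4 b p₀ q₀ r₀ m U = 0}.Finite := by
    have hd1 : (m ^ 2 * b - r₀ ^ 2 * b ^ 2 * q₀ ^ 2) ≠ 0 ∨ (-(2 * r₀ ^ 2 * b * p₀ * q₀)) ≠ 0
        ∨ (m ^ 2 - r₀ ^ 2 * p₀ ^ 2) ≠ 0 := by
      by_contra hall
      push_neg at hall
      obtain ⟨ha, hb', hc⟩ := hall
      have h2' : (2 * r₀ ^ 2 * b) * (p₀ * q₀) = 0 := by linear_combination -hb'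
      have hnz : (2 * r₀ ^ 2 * b) ≠ 0 := mul_ne_zero (mul_ne_zero h2q (pow_ne_zero 2 hr₀)) hb
      rcases mul_eq_zero.mp ((mul_eq_zero.mp h2').resolve_left hnz) with hp | hq
      · have hm2 : m ^ 2 = 0 := by rw [hp] at hc; linear_combination hc
        exact hm0 (hpow2 m hm2)
      · have hm2 : m ^ 2 * b = 0 := by rw [hq] at ha; linear_combination ha
        rcases mul_eq_zero.mp hm2 with h' | h'
        · exact hm0 (hpow2 m h')
        · exact hb h'
    have hd2 : (m ^ 2 * b + r₀ ^ 2 * b ^ 2 * q₀ ^ 2) ≠ 0 ∨ (2 * r₀ ^ 2 * b * p₀ * q₀) ≠ 0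
        ∨ (m ^ 2 + r₀ ^ 2 * p₀ ^ 2) ≠ 0 := by
      by_contra hall
      push_neg at hall
      obtain ⟨ha, hb', hc⟩ := hall
      have h2' : (2 * r₀ ^ 2 * b) * (p₀ * q₀) = 0 := by linear_combination hb'
      have hnz : (2 * r₀ ^ 2 * b) ≠ 0 := mul_ne_zero (mul_ne_zero h2q (pow_ne_zero 2 hr₀)) hb
      rcases mul_eq_zero.mp ((mul_eq_zero.mp h2').resolve_left hnz) with hp | hq
      · have hm2 : m ^ 2 = 0 := by rw [hp] at hc; linear_combination hc
        exact hm0 (hpow2 m hm2)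
      · have hm2 : m ^ 2 * b = 0 := by rw [hq] at ha; linear_combination ha
        rcases mul_eq_zero.mp hm2 with h' | h'
        · exact hm0 (hpow2 m h')
        · exact hb h'
    refine Set.Finite.subset ((s9_quadfin _ _ _ hd1).union (s9_quadfin _ _ _ hd2)) ?_
    intro U hU
    have h0 : s9c4 b p₀ q₀ r₀ m U = 0 := hU
    simp only [s9c4, s9L, s9A] at h0
    have hz : r₀ ^ 2 * (((m ^ 2 * b - r₀ ^ 2 * b ^ 2 * q₀ ^ 2) * U ^ 2
        + (-(2 * r₀ ^ 2 * b * p₀ * q₀)) * U + (m ^ 2 - r₀ ^ 2 * p₀ ^ 2))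
      * ((m ^ 2 * b + r₀ ^ 2 * b ^ 2 * q₀ ^ 2) * U ^ 2
        + (2 * r₀ ^ 2 * b * p₀ * q₀) * U + (m ^ 2 + r₀ ^ 2 * p₀ ^ 2))) = 0 := by
      linear_combination h0
    rcases mul_eq_zero.mp hz with h' | h'
    · exact absurd h' (pow_ne_zero 2 hr₀)
    · rcases mul_eq_zero.mp h' with h'' | h''
      · exact Or.inl h''
      · exact Or.inr h''
  have hfinc2 : {U : ℚ | s9c2 b p₀ q₀ r₀ m U = 0}.Finite := by
    have hd3 : ((m ^ 2 - 2 * r₀ ^ 4) * b ^ 2 * q₀ ^ 2 + m ^ 3 * b) ≠ 0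
        ∨ (2 * (m ^ 2 - 2 * r₀ ^ 4) * b * p₀ * q₀) ≠ 0
        ∨ ((m ^ 2 - 2 * r₀ ^ 4) * p₀ ^ 2 + m ^ 3) ≠ 0 := by
      by_cases hq : q₀ = 0
      · refine Or.inl fun hc => ?_
        have : m ^ 3 * b = 0 := by rw [hq] at hc; linear_combination hc
        rcases mul_eq_zero.mp this with h' | h'
        · exact hm0 (hpow3 m h')
        · exact hb h'
      · by_cases hp : p₀ = 0
        · refine Or.inr (Or.inr fun hc => ?_)
          have : m ^ 3 = 0 := by rw [hp] at hc; linear_combination hc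
          exact hm0 (hpow3 m this)
        · by_cases hE : m ^ 2 - 2 * r₀ ^ 4 = 0
          · refine Or.inr (Or.inr fun hc => ?_)
            have : m ^ 3 = 0 := by linear_combination hc - p₀ ^ 2 * hE
            exact hm0 (hpow3 m this)
          · exact Or.inr (Or.inl (mul_ne_zero (mul_ne_zero (mul_ne_zero
              (mul_ne_zero h2q hE) hb) hp) hq))
    refine Set.Finite.subset (s9_quadfin _ _ _ hd3) ?_
    intro U hU
    have h0 : s9c2 b p₀ q₀ r₀ m U = 0 := hU
    simp only [s9c2, s9L, s9A] at h0
    have hz : (2 * m ^ 2 * r₀ ^ 2) * (((m ^ 2 - 2 * r₀ ^ 4) * b ^ 2 * q₀ ^ 2 + m ^ 3 * b) * U ^ 2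
        + (2 * (m ^ 2 - 2 * r₀ ^ 4) * b * p₀ * q₀) * U
        + ((m ^ 2 - 2 * r₀ ^ 4) * p₀ ^ 2 + m ^ 3)) = 0 := by
      linear_combination h0
    have hnz : (2 * m ^ 2 * r₀ ^ 2) ≠ 0 :=
      mul_ne_zero (mul_ne_zero h2q (pow_ne_zero 2 hm0)) (pow_ne_zero 2 hr₀)
    exact (mul_eq_zero.mp hz).resolve_left hnz
  -- the bad point set T
  set T : Set (ℚ × ℚ) := {P : ℚ × ℚ | P ∈ S ∧ (s9c4 b p₀ q₀ r₀ m P.1 = 0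
      ∨ p₀ + b * q₀ * P.1 = 0 ∨ p₀ * P.1 - q₀ = 0 ∨ s9c2 b p₀ q₀ r₀ m P.1 = 0)} with hTdef
  have hTfin : T.Finite := by
    refine s9_slicefin (g := fun U => s9G b p₀ q₀ r₀ m U) (fun P hP => hP.1) ?_
    refine Set.Finite.subset ((hfinc4.union hfinL).union (hfinline.union hfinc2)) ?_
    rintro U ⟨P, hP, rfl⟩
    rcases hP.2 with h' | h' | h' | h'
    · exact Or.inl (Or.inl h')
    · exact Or.inl (Or.inr h')
    · exact Or.inr (Or.inl h')
    · exact Or.inr (Or.inr h')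
  have hS'inf : (S \ T).Infinite := hinfS.diff hTfin
  have hS'p : ∀ P ∈ S \ T, P.2 ^ 2 = s9G b p₀ q₀ r₀ m P.1 ∧ s9c4 b p₀ q₀ r₀ m P.1 ≠ 0 ∧
      (p₀ + b * q₀ * P.1) ≠ 0 ∧ (p₀ * P.1 - q₀) ≠ 0 ∧ s9c2 b p₀ q₀ r₀ m P.1 ≠ 0 := by
    rintro P ⟨hPS, hPT⟩
    refine ⟨hPS, ?_, ?_, ?_, ?_⟩
    · intro h'; exact hPT ⟨hPS, Or.inl h'⟩
    · intro h'; exact hPT ⟨hPS, Or.inr (Or.inl h')⟩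
    · intro h'; exact hPT ⟨hPS, Or.inr (Or.inr (Or.inl h'))⟩
    · intro h'; exact hPT ⟨hPS, Or.inr (Or.inr (Or.inr h'))⟩
  -- the root property
  have hroot : ∀ P ∈ S \ T, s9c2 b p₀ q₀ r₀ m P.1 + s9c3 b p₀ q₀ r₀ m P.1 * (s9u b p₀ q₀ r₀ m P)
      + s9c4 b p₀ q₀ r₀ m P.1 * (s9u b p₀ q₀ r₀ m P) ^ 2 = 0 := by
    intro P hP
    obtain ⟨hw, h4, -, -, -⟩ := hS'p P hP
    have hδ := s9_disc b p₀ q₀ r₀ m P.1 P.2 hm hw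
    exact s9_rootfact _ _ _ _ h4 hδ
  -- membership equation
  have hmem : ∀ P ∈ S \ T,
      ((p₀ + s9u b p₀ q₀ r₀ m P) ^ 2 + b * (q₀ + P.1 * s9u b p₀ q₀ r₀ m P) ^ 2) ^ 2
        = (s9X b p₀ q₀ r₀ m P) ^ 4 + (2 * (m ^ 2 - r₀ ^ 4) / r₀ ^ 2) * (s9X b p₀ q₀ r₀ m P) ^ 2
          - (m ^ 2 - r₀ ^ 4) := by
    intro P hP
    have hid := s9_main_id b p₀ q₀ r₀ m P.1 (s9u b p₀ q₀ r₀ m P) hm hm0 hr₀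
    rw [hroot P hP] at hid
    simp only [mul_zero, zero_div, add_zero] at hid
    simpa only [s9X] using hid
  have himg : (s9X b p₀ q₀ r₀ m) '' (S \ T) ⊆ {x : ℚ | ∃ p q : ℚ, (p ^ 2 + b * q ^ 2) ^ 2 =
      x ^ 4 + (2 * (m ^ 2 - r₀ ^ 4) / r₀ ^ 2) * x ^ 2 - (m ^ 2 - r₀ ^ 4)} := by
    rintro x ⟨P, hP, rfl⟩
    exact ⟨p₀ + s9u b p₀ q₀ r₀ m P, q₀ + P.1 * s9u b p₀ q₀ r₀ m P, hmem P hP⟩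
  have hnotr : ∀ P ∈ S \ T, s9X b p₀ q₀ r₀ m P ≠ r₀ := by
    intro P hP hcontra
    obtain ⟨hw, h4, hL, hline, hc2⟩ := hS'p P hP
    have hu0 : s9u b p₀ q₀ r₀ m P = 0 := by
      have h1 : r₀ * (p₀ + b * q₀ * P.1) * s9u b p₀ q₀ r₀ m P / m = 0 := by
        simp only [s9X] at hcontra; linarith
      have h2 : r₀ * (p₀ + b * q₀ * P.1) * s9u b p₀ q₀ r₀ m P = 0 := by
        rcases div_eq_zero_iff.mp h1 with h' | h'
        · exact h'
        · exact absurd h' hm0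
      rcases mul_eq_zero.mp h2 with h' | h'
      · rcases mul_eq_zero.mp h' with h'' | h''
        · exact absurd h'' hr₀
        · exact absurd h'' hL
      · exact h'
    have hr := hroot P hP
    rw [hu0] at hr
    simp only [mul_zero, ne_eq, OfNat.ofNat_ne_zero, not_false_eq_true, zero_pow, add_zero] at hr
    exact hc2 hr
  -- fibers of s9X over S \ T are finite
  have hfiber : ∀ X₀ : ℚ, ((S \ T) ∩ (s9X b p₀ q₀ r₀ m) ⁻¹' {X₀}).Finite := by
    intro X₀
    by_cases hX₀ : X₀ = r₀
    · refine Set.Finite.subset Set.finite_empty ?_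
      rintro P ⟨hP, hPX⟩
      have : s9X b p₀ q₀ r₀ m P = X₀ := hPX
      exact absurd (hX₀ ▸ this) (hnotr P hP)
    · have hKv : ∀ v : ℚ, {z : ℚ × ℚ | p₀ * z.1 + b * q₀ * z.2 = m * X₀ / r₀ ∧
          z.1 ^ 2 + b * z.2 ^ 2 = v}.Finite := by
        intro v
        by_cases hq : q₀ = 0
        · have hp : p₀ ≠ 0 := fun hp => hbq0 ⟨hp, hq⟩
          refine Set.Finite.subset (Set.Finite.image (fun y => ((m * X₀ / (r₀ * p₀) : ℚ), y))
            (s9_quadfin b 0 ((m * X₀ / (r₀ * p₀)) ^ 2 - v) (Or.inl hb))) ?_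
          rintro z ⟨hl, hn⟩
          rw [hq] at hl
          have hz1' : z.1 * (r₀ * p₀) = m * X₀ := by
            have h2' : p₀ * z.1 * r₀ = m * X₀ / r₀ * r₀ := by rw [← hl]; ring
            rw [div_mul_cancel₀ _ hr₀] at h2'
            linear_combination h2'
          have hz1 : z.1 = m * X₀ / (r₀ * p₀) := by
            rw [eq_div_iff (mul_ne_zero hr₀ hp)]; linear_combination hz1'
          refine ⟨z.2, ?_, ?_⟩
          · simp only [Set.mem_setOf_eq]
            rw [← hz1]
            linear_combination hn
          · rw [← hz1]
        · refine Set.Finite.subset (Set.Finite.image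
            (fun x => ((x : ℚ), (m * X₀ / r₀ - p₀ * x) / (b * q₀)))
            (s9_quadfin m (-(2 * p₀ * (m * X₀ / r₀)))
              ((m * X₀ / r₀) ^ 2 - b * q₀ ^ 2 * v) (Or.inl hm0))) ?_
          rintro z ⟨hl, hn⟩
          refine ⟨z.1, ?_, ?_⟩
          · simp only [Set.mem_setOf_eq]
            linear_combination z.1 ^ 2 * hm + b * q₀ ^ 2 * hn
              + (p₀ * z.1 - b * q₀ * z.2 - m * X₀ / r₀) * hl
          · have hz2 : (m * X₀ / r₀ - p₀ * z.1) / (b * q₀) = z.2 := by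
              rw [div_eq_iff (mul_ne_zero hb hq)]
              linear_combination -hl
            exact Prod.ext rfl hz2
      set K : Set (ℚ × ℚ) := {z : ℚ × ℚ | p₀ * z.1 + b * q₀ * z.2 = m * X₀ / r₀ ∧
          (z.1 ^ 2 + b * z.2 ^ 2) ^ 2 = X₀ ^ 4 + (2 * (m ^ 2 - r₀ ^ 4) / r₀ ^ 2) * X₀ ^ 2
            - (m ^ 2 - r₀ ^ 4)} with hKdef
      have hKfin : K.Finite := by
        rcases Set.eq_empty_or_nonempty K with hKe | ⟨z0, hz0⟩
        · rw [hKe]; exact Set.finite_empty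
        · refine Set.Finite.subset ((hKv (z0.1 ^ 2 + b * z0.2 ^ 2)).union
            (hKv (-(z0.1 ^ 2 + b * z0.2 ^ 2)))) ?_
          rintro z ⟨hl, hn⟩
          have hprod : (z.1 ^ 2 + b * z.2 ^ 2 - (z0.1 ^ 2 + b * z0.2 ^ 2))
              * (z.1 ^ 2 + b * z.2 ^ 2 + (z0.1 ^ 2 + b * z0.2 ^ 2)) = 0 := by
            linear_combination hn - hz0.2
          rcases mul_eq_zero.mp hprod with h' | h'
          · exact Or.inl ⟨hl, by linarith⟩
          · exact Or.inr ⟨hl, by linarith⟩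
      have himgK : (fun P : ℚ × ℚ => (p₀ + s9u b p₀ q₀ r₀ m P, q₀ + P.1 * s9u b p₀ q₀ r₀ m P))
          '' ((S \ T) ∩ (s9X b p₀ q₀ r₀ m) ⁻¹' {X₀}) ⊆ K := by
        rintro z ⟨P, ⟨hP, hPX⟩, rfl⟩
        have hXP : s9X b p₀ q₀ r₀ m P = X₀ := hPX
        constructor
        · rw [← hXP]
          simp only [s9X]
          exact s9_line b p₀ q₀ r₀ m P.1 (s9u b p₀ q₀ r₀ m P) hm hm0 hr₀
        · rw [← hXP]
          exact hmem P hP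
      have hinj : Set.InjOn (fun P : ℚ × ℚ =>
            (p₀ + s9u b p₀ q₀ r₀ m P, q₀ + P.1 * s9u b p₀ q₀ r₀ m P))
          ((S \ T) ∩ (s9X b p₀ q₀ r₀ m) ⁻¹' {X₀}) := by
        rintro P ⟨hP, hPX⟩ P' ⟨hP', hPX'⟩ hψ
        obtain ⟨hw, h4, hL, hline, hc2⟩ := hS'p P hP
        obtain ⟨hw', h4', hL', hline', hc2'⟩ := hS'p P' hP'
        have hXP : s9X b p₀ q₀ r₀ m P = X₀ := hPX
        have hXP' : s9X b p₀ q₀ r₀ m P' = X₀ := hPX'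
        have hu : s9u b p₀ q₀ r₀ m P ≠ 0 := by
          intro h0
          apply hX₀
          rw [← hXP]
          simp only [s9X, h0, mul_zero, zero_div, add_zero]
        have h1 : p₀ + s9u b p₀ q₀ r₀ m P = p₀ + s9u b p₀ q₀ r₀ m P' :=
          congrArg Prod.fst hψ
        have hueq : s9u b p₀ q₀ r₀ m P = s9u b p₀ q₀ r₀ m P' := by linarith
        have h2 : q₀ + P.1 * s9u b p₀ q₀ r₀ m P = q₀ + P'.1 * s9u b p₀ q₀ r₀ m P' :=
          congrArg Prod.snd hψ
        have hUeq : P.1 = P'.1 := by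
          rw [← hueq] at h2
          have h3 : P.1 * s9u b p₀ q₀ r₀ m P = P'.1 * s9u b p₀ q₀ r₀ m P := by linarith
          exact mul_right_cancel₀ hu h3
        have hweq : P.2 = P'.2 := by
          have hd : (2 * s9c4 b p₀ q₀ r₀ m P'.1) ≠ 0 := mul_ne_zero h2q h4'
          have h5 := hueq
          simp only [s9u, hUeq] at h5
          rw [div_eq_div_iff hd hd] at h5
          have h6 := mul_right_cancel₀ hd h5
          have h7 := add_left_cancel h6
          have hk : 2 * m ^ 2 * r₀ ^ 2 * (p₀ * P'.1 - q₀) ≠ 0 :=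
            mul_ne_zero (mul_ne_zero (mul_ne_zero h2q (pow_ne_zero 2 hm0))
              (pow_ne_zero 2 hr₀)) hline'
          exact mul_left_cancel₀ hk h7
        exact Prod.ext hUeq hweq
      exact Set.Finite.of_finite_image (hKfin.subset himgK) hinj
  -- conclusion
  by_contra hfin
  rw [Set.not_infinite] at hfin
  have himgfin : ((s9X b p₀ q₀ r₀ m) '' (S \ T)).Finite := hfin.subset himg
  have hcover : (S \ T) ⊆ ⋃ X₀ ∈ (s9X b p₀ q₀ r₀ m) '' (S \ T),
      ((S \ T) ∩ (s9X b p₀ q₀ r₀ m) ⁻¹' {X₀}) := by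
    intro P hP
    exact Set.mem_biUnion (Set.mem_image_of_mem _ hP) ⟨hP, rfl⟩
  exact hS'inf (Set.Finite.subset (himgfin.biUnion fun X₀ _ => hfiber X₀) hcover)
end

section
/- Let b, p₀, q₀, r₀ ∈ ℚ with b ≠ 0, q₀ ≠ 0, and set m = p₀² + b·q₀². Assume m ≠ 0 and that −b is not the square of a rational number. If the set of rational points (v, w) ∈ ℚ² satisfying w² = 2b·(−m² + 2b·q₀²r₀²·v² + b²q₀⁴·v⁴) is infinite, then the set of X ∈ ℚ for which there exist p, q ∈ ℚ with (p² + b·q²)² = X⁴ − 2r₀²·X² + (m² + r₀⁴) is infinite. -/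
private lemma finite_sq (c : ℚ) : {w : ℚ | w ^ 2 = c}.Finite := by
  refine (Polynomial.finite_setOf_isRoot
    (Polynomial.X_pow_sub_C_ne_zero (n := 2) (by norm_num) c)).subset ?_
  intro w hw
  simp only [Set.mem_setOf_eq, Polynomial.IsRoot, Polynomial.eval_sub, Polynomial.eval_pow,
    Polynomial.eval_X, Polynomial.eval_C, sub_eq_zero]
  exact hw

private lemma finite_quartic (a4 a2 a0 : ℚ) (h : a2 ≠ 0 ∨ a0 ≠ 0) :
    {v : ℚ | a4 * v ^ 4 + a2 * v ^ 2 + a0 = 0}.Finite := by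
  set p : Polynomial ℚ :=
    Polynomial.C a4 * Polynomial.X ^ 4 + Polynomial.C a2 * Polynomial.X ^ 2 + Polynomial.C a0
    with hp
  have hpne : p ≠ 0 := by
    intro h0
    rcases h with h | h
    · have h2 := congrArg (fun q => Polynomial.coeff q 2) h0
      simp [hp, Polynomial.coeff_add, Polynomial.coeff_C_mul, Polynomial.coeff_X_pow,
        Polynomial.coeff_C] at h2
      exact h h2
    · have h2 := congrArg (fun q => Polynomial.coeff q 0) h0
      simp [hp, Polynomial.coeff_add, Polynomial.coeff_C_mul, Polynomial.coeff_X_pow,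
        Polynomial.coeff_C] at h2
      exact h h2
  refine (Polynomial.finite_setOf_isRoot hpne).subset ?_
  intro v hv
  simp only [Set.mem_setOf_eq] at hv
  simp only [Set.mem_setOf_eq, Polynomial.IsRoot, hp, Polynomial.eval_add, Polynomial.eval_mul,
    Polynomial.eval_pow, Polynomial.eval_X, Polynomial.eval_C]
  linear_combination hv

private lemma fin_pair (g : ℚ → ℚ) (A : Set (ℚ × ℚ)) (hA : ∀ P ∈ A, P.2 ^ 2 = g P.1)
    (T : Set ℚ) (hT : T.Finite) (h1 : ∀ P ∈ A, P.1 ∈ T) : A.Finite := by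
  have hsub : A ⊆ ⋃ v ∈ T, ({v} ×ˢ {w : ℚ | w ^ 2 = g v}) := by
    intro P hP
    refine Set.mem_biUnion (h1 P hP) ?_
    exact ⟨rfl, hA P hP⟩
  exact ((hT.biUnion fun v _ => (Set.finite_singleton v).prod (finite_sq (g v)))).subset hsub

private lemma Hzero (b q₀ r₀ m v w ε : ℚ)
    (hd : b ^ 2 * m ^ 2 - (b * q₀ * v) ^ 4 ≠ 0)
    (hε : ε * (b ^ 2 * m ^ 2 - (b * q₀ * v) ^ 4) = 2 * r₀ * (b * q₀ * v) ^ 3 + m * b * w)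
    (hw2 : w ^ 2 = 2 * b * (-m ^ 2 + 2 * b * q₀ ^ 2 * r₀ ^ 2 * v ^ 2 + b ^ 2 * q₀ ^ 4 * v ^ 4)) :
    (b ^ 2 * m ^ 2 - (b * q₀ * v) ^ 4) * ε ^ 2 - 4 * r₀ * (b * q₀ * v) ^ 3 * ε
      + 2 * b * m ^ 2 - 4 * r₀ ^ 2 * (b * q₀ * v) ^ 2 = 0 := by
  have h2 : (b ^ 2 * m ^ 2 - (b * q₀ * v) ^ 4) ^ 2 *
      ((b ^ 2 * m ^ 2 - (b * q₀ * v) ^ 4) * ε ^ 2 - 4 * r₀ * (b * q₀ * v) ^ 3 * ε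
        + 2 * b * m ^ 2 - 4 * r₀ ^ 2 * (b * q₀ * v) ^ 2) = 0 := by
    linear_combination
      ((ε * (b ^ 2 * m ^ 2 - (b * q₀ * v) ^ 4) + (2 * r₀ * (b * q₀ * v) ^ 3 + m * b * w))
          * (b ^ 2 * m ^ 2 - (b * q₀ * v) ^ 4)
        - 4 * r₀ * (b * q₀ * v) ^ 3 * (b ^ 2 * m ^ 2 - (b * q₀ * v) ^ 4)) * hε
      + ((b ^ 2 * m ^ 2 - (b * q₀ * v) ^ 4) * m ^ 2 * b ^ 2) * hw2
  exact (mul_eq_zero.mp h2).resolve_left (pow_ne_zero 2 hd)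

theorem stmt_10 (b p₀ q₀ r₀ m : ℚ) (hb : b ≠ 0) (hq₀ : q₀ ≠ 0)
    (hm : m = p₀ ^ 2 + b * q₀ ^ 2) (hm0 : m ≠ 0)
    (hirr : ¬ IsSquare (-b))
    (hinf : {P : ℚ × ℚ | P.2 ^ 2 =
      2 * b * (-m ^ 2 + 2 * b * q₀ ^ 2 * r₀ ^ 2 * P.1 ^ 2 + b ^ 2 * q₀ ^ 4 * P.1 ^ 4)}.Infinite) :
    {x : ℚ | ∃ p q : ℚ, (p ^ 2 + b * q ^ 2) ^ 2 =
      x ^ 4 - 2 * r₀ ^ 2 * x ^ 2 + (m ^ 2 + r₀ ^ 4)}.Infinite := by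
  set g : ℚ → ℚ := fun v =>
    2 * b * (-m ^ 2 + 2 * b * q₀ ^ 2 * r₀ ^ 2 * v ^ 2 + b ^ 2 * q₀ ^ 4 * v ^ 4) with hg
  set S : Set ℚ := {x : ℚ | ∃ p q : ℚ, (p ^ 2 + b * q ^ 2) ^ 2 =
      x ^ 4 - 2 * r₀ ^ 2 * x ^ 2 + (m ^ 2 + r₀ ^ 4)} with hSdef
  set Cv : Set (ℚ × ℚ) := {P : ℚ × ℚ | P.2 ^ 2 = g P.1} with hCvdef
  have hCvinf : Cv.Infinite := hinf
  set Bad : Set (ℚ × ℚ) := {P : ℚ × ℚ | b ^ 2 * m ^ 2 - (b * q₀ * P.1) ^ 4 = 0} with hBaddef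
  have hb2m2 : b ^ 2 * m ^ 2 ≠ 0 := by positivity
  have hBadfin : (Cv ∩ Bad).Finite := by
    refine fin_pair g _ (fun P hP => hP.1)
      {v : ℚ | (-(b ^ 4 * q₀ ^ 4)) * v ^ 4 + 0 * v ^ 2 + b ^ 2 * m ^ 2 = 0}
      (finite_quartic _ _ _ (Or.inr hb2m2)) ?_
    intro P hP
    have h := hP.2
    simp only [hBaddef, Set.mem_setOf_eq] at h
    simp only [Set.mem_setOf_eq]
    linear_combination h
  set Cg : Set (ℚ × ℚ) := Cv \ Bad with hCgdef
  have hCginf : Cg.Infinite := by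
    refine (hCvinf.diff hBadfin).mono ?_
    intro P hP
    exact ⟨hP.1, fun hB => hP.2 ⟨hP.1, hB⟩⟩
  -- the map from curve points to x-values
  set F : ℚ × ℚ → ℚ := fun P => r₀ + (b * q₀ * P.1) *
      ((2 * r₀ * (b * q₀ * P.1) ^ 3 + m * b * P.2) /
        (b ^ 2 * m ^ 2 - (b * q₀ * P.1) ^ 4)) with hFdef
  -- image lands in S
  have himg : ∀ P ∈ Cg, F P ∈ S := by
    rintro ⟨v, w⟩ ⟨hPC, hPB⟩
    have hw2 : w ^ 2 = 2 * b *
        (-m ^ 2 + 2 * b * q₀ ^ 2 * r₀ ^ 2 * v ^ 2 + b ^ 2 * q₀ ^ 4 * v ^ 4) := hPC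
    have hd : b ^ 2 * m ^ 2 - (b * q₀ * v) ^ 4 ≠ 0 := by
      intro h0; exact hPB h0
    set ε : ℚ := (2 * r₀ * (b * q₀ * v) ^ 3 + m * b * w) /
        (b ^ 2 * m ^ 2 - (b * q₀ * v) ^ 4) with hεdef
    have hε : ε * (b ^ 2 * m ^ 2 - (b * q₀ * v) ^ 4)
        = 2 * r₀ * (b * q₀ * v) ^ 3 + m * b * w := div_mul_cancel₀ _ hd
    have hH := Hzero b q₀ r₀ m v w ε hd hε hw2
    refine ⟨p₀ + b * q₀ * ε, q₀ - p₀ * ε, ?_⟩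
    show ((p₀ + b * q₀ * ε) ^ 2 + b * (q₀ - p₀ * ε) ^ 2) ^ 2 =
      (r₀ + (b * q₀ * v) * ε) ^ 4 - 2 * r₀ ^ 2 * (r₀ + (b * q₀ * v) * ε) ^ 2
        + (m ^ 2 + r₀ ^ 4)
    linear_combination ε ^ 2 * hH +
      (-((p₀ ^ 2 + b * q₀ ^ 2) + m) * (1 + b * ε ^ 2) ^ 2) * hm
  -- fibers of F over Cg are finite
  have hfib : ∀ y : ℚ, {P : ℚ × ℚ | P ∈ Cg ∧ F P = y}.Finite := by
    intro y
    set k : ℚ := (y - r₀) / (b * q₀) with hkdef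
    refine fin_pair g _ (fun P hP => hP.1.1)
      {v : ℚ | (-(b ^ 4 * q₀ ^ 4 * k ^ 2 + 4 * r₀ * b ^ 3 * q₀ ^ 3 * k
          + 4 * r₀ ^ 2 * b ^ 2 * q₀ ^ 2)) * v ^ 4
        + (2 * b * m ^ 2) * v ^ 2 + b ^ 2 * m ^ 2 * k ^ 2 = 0}
      (finite_quartic _ _ _ (Or.inl (by positivity))) ?_
    rintro ⟨v, w⟩ ⟨⟨hPC, hPB⟩, hPF⟩
    have hw2 : w ^ 2 = 2 * b *
        (-m ^ 2 + 2 * b * q₀ ^ 2 * r₀ ^ 2 * v ^ 2 + b ^ 2 * q₀ ^ 4 * v ^ 4) := hPC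
    have hd : b ^ 2 * m ^ 2 - (b * q₀ * v) ^ 4 ≠ 0 := by
      intro h0; exact hPB h0
    set ε : ℚ := (2 * r₀ * (b * q₀ * v) ^ 3 + m * b * w) /
        (b ^ 2 * m ^ 2 - (b * q₀ * v) ^ 4) with hεdef
    have hε : ε * (b ^ 2 * m ^ 2 - (b * q₀ * v) ^ 4)
        = 2 * r₀ * (b * q₀ * v) ^ 3 + m * b * w := div_mul_cancel₀ _ hd
    have hH := Hzero b q₀ r₀ m v w ε hd hε hw2
    have hx : r₀ + (b * q₀ * v) * ε = y := hPF
    have hbq : b * q₀ ≠ 0 := mul_ne_zero hb hq₀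
    have hk : v * ε = k := by
      rw [hkdef, eq_div_iff hbq]
      linear_combination hx
    simp only [Set.mem_setOf_eq]
    linear_combination v ^ 2 * hH +
      (-((b ^ 2 * m ^ 2 - b ^ 4 * q₀ ^ 4 * v ^ 4) * (k + v * ε)
        - 4 * r₀ * b ^ 3 * q₀ ^ 3 * v ^ 4)) * hk
  -- conclude
  intro hSfin
  have hsub : Cg ⊆ ⋃ y ∈ S, {P : ℚ × ℚ | P ∈ Cg ∧ F P = y} := by
    intro P hP
    exact Set.mem_biUnion (himg P hP) ⟨hP, rfl⟩
  exact hCginf ((hSfin.biUnion fun y _ => hfib y).subset hsub)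
end

section
/- The set of X ∈ ℚ for which there exist p, q ∈ ℚ with (p² + q² + 1)² = 9 + 24X + 288X² + 16X³ + 4X⁴ is infinite; that is, the curve Y² = 9 + 24X + 288X² + 16X³ + 4X⁴ has infinitely many rational points with Y-coordinate represented by the inhomogeneous quadratic form p² + q² + 1. -/
/-
With p = s + 1 + u, q = s + 1 - u and 9 + 24s + 288s² + 16s³ + 4s⁴ = (2s² + 4s + 3)² + 260s²,
the equation becomes u⁴ + (2s² + 4s + 3)u² = 65s². As a quadratic in s its discriminant is
4u²(-2u⁴ + 63u² + 195), so each rational point (u, v) of the quartic v² = -2u⁴ + 63u² + 195 gives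
a rational s, and each s comes from at most four values of u. The quartic is birational to
E : y² = x³ + 237x + 84042. Doubling 2·(-38, 142) over and over lowers the 2-adic valuation of x
by 2 at each step, and the corresponding u have v₂(u - 1) strictly increasing, so they are
pairwise distinct.
-/

def HasPadicVal (p : ℕ) (x : ℚ) (n : ℤ) : Prop :=
  x ≠ 0 ∧ padicValRat p x = n

namespace HasPadicVal

variable {p : ℕ} {x y : ℚ} {m n : ℤ}

theorem congr_val (h : HasPadicVal p x m) (hmn : m = n) : HasPadicVal p x n :=
  hmn ▸ h

theorem neg (hx : HasPadicVal p x m) : HasPadicVal p (-x) m :=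
  ⟨neg_ne_zero.mpr hx.1, by rw [padicValRat.neg, hx.2]⟩

variable [Fact p.Prime]

theorem of_eq_pow_mul (j : ℕ) (c : ℤ) (hc : ¬(p : ℤ) ∣ c) (h : x = p ^ j * c) :
    HasPadicVal p x j := by
  have hc0 : (c : ℚ) ≠ 0 := by exact_mod_cast fun h0 : c = 0 => hc (h0 ▸ dvd_zero _)
  have hp : (p : ℚ) ≠ 0 := by exact_mod_cast (Fact.out : p.Prime).ne_zero
  refine ⟨h ▸ mul_ne_zero (pow_ne_zero _ hp) hc0, ?_⟩
  rw [h, padicValRat.mul (pow_ne_zero _ hp) hc0, padicValRat.pow,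
    padicValRat.self (Fact.out : p.Prime).one_lt, padicValRat.of_int,
    padicValInt.eq_zero_of_not_dvd hc]
  ring

theorem mul (hx : HasPadicVal p x m) (hy : HasPadicVal p y n) :
    HasPadicVal p (x * y) (m + n) :=
  ⟨mul_ne_zero hx.1 hy.1, by rw [padicValRat.mul hx.1 hy.1, hx.2, hy.2]⟩

theorem div (hx : HasPadicVal p x m) (hy : HasPadicVal p y n) :
    HasPadicVal p (x / y) (m - n) :=
  ⟨div_ne_zero hx.1 hy.1, by rw [padicValRat.div hx.1 hy.1, hx.2, hy.2]⟩

theorem pow (hx : HasPadicVal p x m) (k : ℕ) : HasPadicVal p (x ^ k) (k * m) :=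
  ⟨pow_ne_zero k hx.1, by rw [padicValRat.pow, hx.2]⟩

theorem add_of_lt_padicValRat (hx : HasPadicVal p x m) (h : m < padicValRat p y) :
    HasPadicVal p (x + y) m := by
  rcases eq_or_ne y 0 with rfl | hy
  · simpa using hx
  have hxy : x + y ≠ 0 := fun h0 => by
    rw [eq_neg_of_add_eq_zero_right h0, padicValRat.neg, hx.2] at h
    exact lt_irrefl _ h
  exact ⟨hxy, by rw [padicValRat.add_eq_of_lt hxy hx.1 hy (hx.2 ▸ h), hx.2]⟩

theorem add_of_lt (hx : HasPadicVal p x m) (hy : HasPadicVal p y n) (h : m < n) :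
    HasPadicVal p (x + y) m :=
  hx.add_of_lt_padicValRat (hy.2 ▸ h)

theorem sub_of_lt (hx : HasPadicVal p x m) (hy : HasPadicVal p y n) (h : m < n) :
    HasPadicVal p (x - y) m :=
  sub_eq_add_neg x y ▸ hx.add_of_lt hy.neg h

end HasPadicVal

section Doubling

variable {K : Type*} [Field K]

def tangentSlope (a : K) (P : K × K) : K :=
  (3 * P.1 ^ 2 + a) / (2 * P.2)

def doublePoint (a : K) (P : K × K) : K × K :=
  (tangentSlope a P ^ 2 - 2 * P.1,
    tangentSlope a P * (P.1 - (tangentSlope a P ^ 2 - 2 * P.1)) - P.2)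

theorem doublePoint_mem {a b : K} {P : K × K} (h : P.2 ^ 2 = P.1 ^ 3 + a * P.1 + b)
    (hy : 2 * P.2 ≠ 0) :
    (doublePoint a P).2 ^ 2 = (doublePoint a P).1 ^ 3 + a * (doublePoint a P).1 + b := by
  have hl : tangentSlope a P * (2 * P.2) = 3 * P.1 ^ 2 + a := div_mul_cancel₀ _ hy
  simp only [doublePoint]
  linear_combination h + (tangentSlope a P ^ 2 - 2 * P.1 - P.1) * hl

end Doubling

-- `P` lies exactly in the `k`-th layer of the formal-group filtration at 2.
def HasTwoAdicDepth (P : ℚ × ℚ) (k : ℤ) : Prop :=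
  HasPadicVal 2 P.1 (-2 * k) ∧ HasPadicVal 2 P.2 (-3 * k)

theorem hasTwoAdicDepth_doublePoint {a : ℚ} (ha : 0 ≤ padicValRat 2 a) {P : ℚ × ℚ} {k : ℤ}
    (hk : 1 ≤ k) (hP : HasTwoAdicDepth P k) : HasTwoAdicDepth (doublePoint a P) (k + 1) := by
  obtain ⟨hx, hy⟩ := hP
  have h2 : HasPadicVal 2 2 1 := .of_eq_pow_mul 1 1 (by decide) (by norm_num)
  have h3 : HasPadicVal 2 3 0 := .of_eq_pow_mul 0 3 (by decide) (by norm_num)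
  have hl : HasPadicVal 2 (tangentSlope a P) (-k - 1) :=
    (((h3.mul (hx.pow 2)).add_of_lt_padicValRat (by push_cast; omega)).div
      (h2.mul hy)).congr_val (by push_cast; ring)
  have hx' : HasPadicVal 2 (doublePoint a P).1 (-2 * (k + 1)) :=
    ((hl.pow 2).sub_of_lt (h2.mul hx) (by push_cast; omega)).congr_val (by push_cast; ring)
  refine ⟨hx', ?_⟩
  have hdx : HasPadicVal 2 (P.1 - (doublePoint a P).1) (-2 * (k + 1)) :=
    neg_sub (doublePoint a P).1 P.1 ▸ (hx'.sub_of_lt hx (by omega)).neg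
  exact ((hl.mul hdx).sub_of_lt hy (by omega)).congr_val (by ring)

def curvePoint (n : ℕ) : ℚ × ℚ :=
  (doublePoint 237)^[n + 1] (-38, 142)

theorem curvePoint_zero : curvePoint 0 = (27005617 / 80656, -140645015273 / 22906304) := by
  norm_num [curvePoint, doublePoint, tangentSlope]

theorem curvePoint_mem_and_hasTwoAdicDepth (n : ℕ) :
    (curvePoint n).2 ^ 2 = (curvePoint n).1 ^ 3 + 237 * (curvePoint n).1 + 84042 ∧
      HasTwoAdicDepth (curvePoint n) (n + 2) := by
  induction n with
  | zero =>
    refine ⟨by norm_num [curvePoint_zero], ?_⟩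
    rw [curvePoint_zero]
    exact ⟨(HasPadicVal.of_eq_pow_mul 0 27005617 (by decide) (by norm_num)).div
        (.of_eq_pow_mul 4 5041 (by decide) (by norm_num)),
      (HasPadicVal.of_eq_pow_mul 0 (-140645015273) (by decide) (by norm_num)).div
        (.of_eq_pow_mul 6 357911 (by decide) (by norm_num))⟩
  | succ n ih =>
    have hsucc : curvePoint (n + 1) = doublePoint 237 (curvePoint n) :=
      Function.iterate_succ_apply' _ _ _
    obtain ⟨hE, hP⟩ := ih
    rw [hsucc]
    refine ⟨doublePoint_mem hE (mul_ne_zero two_ne_zero hP.2.1), ?_⟩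
    exact_mod_cast hasTwoAdicDepth_doublePoint
      (HasPadicVal.of_eq_pow_mul 0 237 (by decide) (by norm_num)).2.ge (by omega) hP

-- `(1 + quarticT P, v)` inverts a birational map from the quartic to `E` taking the origin to
-- `(1, 16)`, so `quarticT` is small 2-adically near the origin.
def quarticT (P : ℚ × ℚ) : ℚ :=
  (512 * P.1 + 10446) / (16 * P.2 - 59 * P.1 + 3051)

theorem exists_sq_eq_quartic {P : ℚ × ℚ} (h : P.2 ^ 2 = P.1 ^ 3 + 237 * P.1 + 84042)
    (hD : 16 * P.2 - 59 * P.1 + 3051 ≠ 0) :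
    ∃ v : ℚ, v ^ 2 = -2 * (1 + quarticT P) ^ 4 + 63 * (1 + quarticT P) ^ 2 + 195 := by
  obtain ⟨x, y⟩ := P
  set D := 16 * y - 59 * x + 3051 with hD_def
  have ht : quarticT (x, y) * D = 512 * x + 10446 := div_mul_cancel₀ _ hD
  generalize quarticT (x, y) = t at ht ⊢
  have key : ((x - 17) * (t * D) ^ 2 - 118 * (t * D) * D - 512 * D ^ 2) ^ 2
      = 1024 * (-2 * (D + t * D) ^ 4 + 63 * (D + t * D) ^ 2 * D ^ 2 + 195 * D ^ 4) := by
    rw [ht, hD_def]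
    linear_combination -4096 * (16777216 * x ^ 3 + 1026883584 * x ^ 2 + 20950831872 * x
      + 142482024567) * h
  refine ⟨(x - 17) * t ^ 2 / 32 - 59 * t / 16 - 16, ?_⟩
  apply mul_left_cancel₀ (mul_ne_zero (by norm_num : (1024 : ℚ) ≠ 0) (pow_ne_zero 4 hD))
  linear_combination key

theorem hasPadicVal_quarticT {P : ℚ × ℚ} {k : ℤ} (hk : 5 ≤ k) (hP : HasTwoAdicDepth P k) :
    HasPadicVal 2 (quarticT P) (k + 5) := by
  obtain ⟨hx, hy⟩ := hP
  have hN : HasPadicVal 2 (512 * P.1 + 10446) (9 + -2 * k) :=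
    ((HasPadicVal.of_eq_pow_mul 9 1 (by decide) (by norm_num)).mul hx).add_of_lt
      (.of_eq_pow_mul 1 5223 (by decide) (by norm_num)) (by push_cast; omega)
  have hD : HasPadicVal 2 (16 * P.2 - 59 * P.1 + 3051) (4 + -3 * k) :=
    (((HasPadicVal.of_eq_pow_mul 4 1 (by decide) (by norm_num)).mul hy).sub_of_lt
      ((HasPadicVal.of_eq_pow_mul 0 59 (by decide) (by norm_num)).mul hx)
      (by push_cast; omega)).add_of_lt
      (.of_eq_pow_mul 0 3051 (by decide) (by norm_num)) (by push_cast; omega)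
  exact (hN.div hD).congr_val (by ring)

theorem two_mul_sq_ne_sixtyFive (u : ℚ) : 2 * u ^ 2 ≠ 65 := by
  intro h
  rcases eq_or_ne u 0 with rfl | hu
  · norm_num at h
  have hl : HasPadicVal 2 (2 * u ^ 2) (1 + 2 * padicValRat 2 u) :=
    (HasPadicVal.of_eq_pow_mul 1 1 (by decide) (by norm_num)).mul
      (HasPadicVal.pow (p := 2) ⟨hu, rfl⟩ 2)
  have hr : HasPadicVal 2 65 0 := .of_eq_pow_mul 0 65 (by decide) (by norm_num)
  have hval := hl.2
  rw [h, hr.2] at hval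
  omega

def SliceRel (s u : ℚ) : Prop :=
  u ^ 4 + (2 * s ^ 2 + 4 * s + 3) * u ^ 2 = 65 * s ^ 2

theorem SliceRel.surface_eq {s u : ℚ} (h : SliceRel s u) :
    ((s + 1 + u) ^ 2 + (s + 1 - u) ^ 2 + 1) ^ 2
      = 9 + 24 * s + 288 * s ^ 2 + 16 * s ^ 3 + 4 * s ^ 4 := by
  unfold SliceRel at h
  linear_combination 4 * h

theorem exists_sliceRel_of_sq_eq {u v : ℚ} (h : v ^ 2 = -2 * u ^ 4 + 63 * u ^ 2 + 195) :
    ∃ s, SliceRel s u := by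
  have h65 : 2 * u ^ 2 - 65 ≠ 0 := sub_ne_zero.mpr (two_mul_sq_ne_sixtyFive u)
  refine ⟨u * (v - 2 * u) / (2 * u ^ 2 - 65), mul_left_cancel₀ h65 ?_⟩
  have hs : u * (v - 2 * u) / (2 * u ^ 2 - 65) * (2 * u ^ 2 - 65) = u * (v - 2 * u) :=
    div_mul_cancel₀ _ h65
  generalize u * (v - 2 * u) / (2 * u ^ 2 - 65) = s at hs ⊢
  linear_combination (s * (2 * u ^ 2 - 65) + 2 * u ^ 2 + u * v) * hs + u ^ 2 * h

theorem finite_setOf_pow_four_add_mul_sq_eq {K : Type*} [Field K] (a b : K) :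
    {u : K | u ^ 4 + a * u ^ 2 = b}.Finite := by
  open Polynomial in
  have hp : (X ^ 4 + C a * X ^ 2 - C b : K[X]) ≠ 0 := fun h0 => by
    simpa using congrArg (coeff · 4) h0
  refine (Polynomial.finite_setOfPred_isRoot hp).subset fun u hu => ?_
  simp [sub_eq_zero.mpr hu]

theorem Set.Infinite.of_finite_fibers {α β : Type*} {R : α → β → Prop} {S : Set α} {T : Set β}
    (hT : T.Infinite) (hTS : ∀ b ∈ T, ∃ a ∈ S, R a b) (hR : ∀ a, {b | R a b}.Finite) :
    S.Infinite := fun hS =>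
  hT <| (hS.biUnion fun a _ => hR a).subset fun b hb => by simpa using hTS b hb

theorem stmt_14 :
    {x : ℚ | ∃ p q : ℚ, (p ^ 2 + q ^ 2 + 1) ^ 2 =
      9 + 24 * x + 288 * x ^ 2 + 16 * x ^ 3 + 4 * x ^ 4}.Infinite := by
  have ht (n : ℕ) : HasPadicVal 2 (quarticT (curvePoint (n + 3))) (n + 10) :=
    (hasPadicVal_quarticT (by omega) (curvePoint_mem_and_hasTwoAdicDepth _).2).congr_val
      (by push_cast; ring)
  have hinj : Function.Injective fun n => 1 + quarticT (curvePoint (n + 3)) := fun m n hmn => by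
    have := (ht m).2
    rw [add_left_cancel hmn, (ht n).2] at this
    omega
  refine (Set.infinite_range_of_injective hinj).of_finite_fibers (R := SliceRel) ?_
    fun s => finite_setOf_pow_four_add_mul_sq_eq _ _
  rintro _ ⟨n, rfl⟩
  obtain ⟨v, hv⟩ := exists_sq_eq_quartic (curvePoint_mem_and_hasTwoAdicDepth _).1
    (div_ne_zero_iff.mp (ht n).1).2
  obtain ⟨s, hs⟩ := exists_sliceRel_of_sq_eq hv
  exact ⟨s, ⟨_, _, hs.surface_eq⟩, hs⟩
end
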